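/- arXiv:1706.06524 — 9 statements merged into one kernel-verified Lean document; each statement's English description precedes it below -/
import Mathlib

section
/- Let X, Y be compact Hausdorff spaces, Π : Y → X a continuous surjection, and T : C(Y) → C(X) a unital bounded linear map with ‖T‖ = 1 and T ∘ Π* = id on C(X). For x ∈ X let μ_x be the unique regular Borel measure on Y with T(f)(x) = ∫_Y f dμ_x for all f ∈ C(Y). Then for each x ∈ X, T(f)(x) lies in the closed convex hull of f(Π⁻¹({x})) for every f ∈ C(Y). -/
/-!
Evaluating `T` at `x` gives a unital contractive functional `φ` on `C(Y, ℂ)`. Such a `φ` maps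
every function into each closed disc containing its range, hence into each closed half-plane
containing its range. Since `φ (g ∘ proj) = g x`, an Urysohn bump `g` at `x` shows that only the
values of `f` near the fibre over `x` matter. A point outside the closed convex hull of
`f (proj⁻¹ {x})` is separated from it by a half-plane, which then also contains the values of `f`
on a neighbourhood of the fibre, and thus contains `φ f`.
-/

open Set

lemma Complex.norm_add_ofReal_sq_le {z : ℂ} (hz : z.re ≤ 0) {t : ℝ} (ht : 0 ≤ t) :
    ‖z + t‖ ^ 2 ≤ ‖z‖ ^ 2 + t ^ 2 := by
  rw [Complex.sq_norm, Complex.sq_norm, Complex.normSq_apply, Complex.normSq_apply]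
  simp only [Complex.add_re, Complex.ofReal_re, Complex.add_im, Complex.ofReal_im, add_zero]
  nlinarith

section UnitalContraction

variable {Y : Type*} [TopologicalSpace Y] [CompactSpace Y] {φ : C(Y, ℂ) →L[ℂ] ℂ}

lemma re_apply_nonpos_of_forall_re_nonpos (hφ1 : φ 1 = 1) (hφ : ‖φ‖ ≤ 1) {k : C(Y, ℂ)}
    (hk : ∀ y, (k y).re ≤ 0) : (φ k).re ≤ 0 := by
  -- `φ k` lies in every disc `‖· + t‖ ≤ √(‖k‖² + t²)`, `t ≥ 0`, containing the range of `k`;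
  -- letting `t → ∞` pushes it into the left half-plane.
  have key : ∀ t : ℝ, 0 ≤ t → ((φ k).re + t) ^ 2 ≤ ‖k‖ ^ 2 + t ^ 2 := by
    intro t ht
    have hshift : ‖k + algebraMap ℂ C(Y, ℂ) t‖ ≤ √(‖k‖ ^ 2 + t ^ 2) :=
      (ContinuousMap.norm_le _ (Real.sqrt_nonneg _)).2 fun y => Real.le_sqrt_of_sq_le <|
        (Complex.norm_add_ofReal_sq_le (hk y) ht).trans <| by
          gcongr; exact k.norm_coe_le_norm y
    calc ((φ k).re + t) ^ 2 = ((φ (k + algebraMap ℂ C(Y, ℂ) t)).re) ^ 2 := by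
          simp [Algebra.algebraMap_eq_smul_one, hφ1]
      _ ≤ ‖φ (k + algebraMap ℂ C(Y, ℂ) t)‖ ^ 2 :=
          sq_le_sq' (neg_le_of_abs_le (Complex.abs_re_le_norm _)) (Complex.re_le_norm _)
      _ ≤ √(‖k‖ ^ 2 + t ^ 2) ^ 2 := by
          gcongr
          exact (φ.le_of_opNorm_le hφ _).trans (by simpa using hshift)
      _ = ‖k‖ ^ 2 + t ^ 2 := Real.sq_sqrt (by positivity)
  by_contra! hpos
  nlinarith [key (‖k‖ ^ 2 / (φ k).re) (by positivity), mul_div_cancel₀ (‖k‖ ^ 2) hpos.ne']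

lemma re_apply_le_re_apply_of_forall_re_le (hφ1 : φ 1 = 1) (hφ : ‖φ‖ ≤ 1) {h k : C(Y, ℂ)}
    (hhk : ∀ y, (h y).re ≤ (k y).re) : (φ h).re ≤ (φ k).re := by
  simpa using re_apply_nonpos_of_forall_re_nonpos hφ1 hφ (k := h - k) fun y => by
    simpa using hhk y

variable {X : Type*} [TopologicalSpace X] [NormalSpace X] [T2Space X]

lemma re_apply_le_of_forall_re_le_of_preimage_subset (hφ1 : φ 1 = 1) (hφ : ‖φ‖ ≤ 1)
    {proj : C(Y, X)} {x : X} (hproj : ∀ g : C(X, ℂ), φ (g.comp proj) = g x)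
    {V : Set Y} (hV : IsOpen V) (hxV : proj ⁻¹' {x} ⊆ V) {h : C(Y, ℂ)} {a : ℝ}
    (hh : ∀ y ∈ V, (h y).re ≤ a) : (φ h).re ≤ a := by
  have hxVc : x ∉ proj '' Vᶜ := fun ⟨y, hyV, hyx⟩ => hyV (hxV hyx)
  obtain ⟨g, hg0, hgx, hg01⟩ := exists_continuous_zero_one_of_isClosed
    (proj.continuous.isClosedMap _ hV.isClosed_compl) isClosed_singleton
    (disjoint_singleton_right.2 hxVc)
  let P : C(Y, ℂ) := (⟨fun t => (g t : ℂ), by fun_prop⟩ : C(X, ℂ)).comp proj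
  have hφP : φ P = 1 := by simp [P, hproj, hgx rfl]
  -- `P` vanishes off `V`, so `h` is dominated by `a P + ‖h‖ (1 - P)`, whose image under `φ` is `a`.
  have hdom : ∀ y, (h y).re ≤ (((a : ℂ) • P + (‖h‖ : ℂ) • (1 - P)) y).re := by
    intro y
    have hre : (h y).re ≤ ‖h‖ := (Complex.re_le_norm _).trans (h.norm_coe_le_norm y)
    obtain ⟨hg0y, hg1y⟩ := hg01 (proj y)
    suffices (h y).re ≤ a * g (proj y) + ‖h‖ * (1 - g (proj y)) by simpa [P] using this
    by_cases hy : y ∈ V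
    · nlinarith [hh y hy]
    · simp [hg0 ⟨y, hy, rfl⟩, hre]
  simpa [hφP, hφ1] using re_apply_le_re_apply_of_forall_re_le hφ1 hφ hdom

theorem apply_mem_closure_convexHull_image_preimage_singleton (hφ1 : φ 1 = 1) (hφ : ‖φ‖ ≤ 1)
    {proj : C(Y, X)} {x : X} (hproj : ∀ g : C(X, ℂ), φ (g.comp proj) = g x) (f : C(Y, ℂ)) :
    φ f ∈ closure (convexHull ℝ (f '' (proj ⁻¹' {x}))) := by
  by_contra hf
  obtain ⟨ℓ, a, hℓK, hℓf⟩ := RCLike.geometric_hahn_banach_closed_point (𝕜 := ℂ)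
    (convex_convexHull ℝ _).closure isClosed_closure hf
  have hℓ : ∀ w, ℓ w = ℓ 1 * w := fun w => by simpa [mul_comm] using ℓ.map_smul w 1
  have hV : IsOpen {y | (ℓ (f y)).re < a} := isOpen_lt (by fun_prop) continuous_const
  have hfibre : proj ⁻¹' {x} ⊆ {y | (ℓ (f y)).re < a} := fun y hy =>
    hℓK _ (subset_closure (subset_convexHull ℝ _ (mem_image_of_mem f hy)))
  have hℓφf := re_apply_le_of_forall_re_le_of_preimage_subset hφ1 hφ hproj hV hfibre
    (h := ℓ 1 • f) fun y hy => by
      rw [ContinuousMap.smul_apply, smul_eq_mul, ← hℓ]; exact hy.le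
  rw [map_smul, smul_eq_mul, ← hℓ] at hℓφf
  exact hℓφf.not_gt hℓf

end UnitalContraction

theorem value_in_closed_convex_hull_of_fibre_image_general {X Y : Type*}
    [TopologicalSpace X] [CompactSpace X] [T2Space X]
    [TopologicalSpace Y] [CompactSpace Y]
    (proj : C(Y, X))
    (T : C(Y, ℂ) →L[ℂ] C(X, ℂ)) (hunital : T 1 = 1) (hnorm : ‖T‖ = 1)
    (hTid : ∀ g : C(X, ℂ), T (g.comp proj) = g) :
    ∀ (f : C(Y, ℂ)) (x : X),
      T f x ∈ closure (convexHull ℝ (f '' (proj ⁻¹' {x}))) := by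
  intro f x
  have hφ : ‖(ContinuousMap.evalCLM ℂ x).comp T‖ ≤ 1 :=
    ContinuousLinearMap.opNorm_le_bound _ zero_le_one fun h =>
      ((T h).norm_coe_le_norm x).trans (by simpa [hnorm] using T.le_opNorm h)
  exact apply_mem_closure_convexHull_image_preimage_singleton (by simp [hunital]) hφ
    (fun g => by simp [hTid]) f

theorem value_in_closed_convex_hull_of_fibre_image {X Y : Type*}
    [TopologicalSpace X] [CompactSpace X] [T2Space X]
    [TopologicalSpace Y] [CompactSpace Y] [T2Space Y]
    (proj : C(Y, X)) (hsurj : Function.Surjective proj)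
    (T : C(Y, ℂ) →L[ℂ] C(X, ℂ)) (hunital : T 1 = 1) (hnorm : ‖T‖ = 1)
    (hTid : ∀ g : C(X, ℂ), T (g.comp proj) = g) :
    ∀ (f : C(Y, ℂ)) (x : X),
      T f x ∈ closure (convexHull ℝ (f '' (proj ⁻¹' {x}))) :=
  value_in_closed_convex_hull_of_fibre_image_general proj T hunital hnorm hTid
end

section
/- Let X, Y be compact Hausdorff spaces, Π : Y → X a continuous surjection, and T : C(Y) → C(X) a unital bounded linear map with ‖T‖ = 1 and T ∘ Π* = id. Then for each x ∈ X, the measure μ_x representing f ↦ T(f)(x) is a probability measure supported in Π⁻¹({x}). -/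
open MeasureTheory

/-- The support of a Borel measure: the complement of the largest open set of measure zero,
equivalently the set of points all of whose open neighbourhoods have nonzero measure. -/
def measureSupport {Z : Type*} [TopologicalSpace Z] [MeasurableSpace Z]
    (μ : Measure Z) : Set Z :=
  {z | ∀ U : Set Z, IsOpen U → z ∈ U → μ U ≠ 0}

theorem representing_measures_are_probability_supported_on_fibres {X Y : Type*}
    [TopologicalSpace X] [CompactSpace X] [T2Space X]
    [TopologicalSpace Y] [CompactSpace Y] [T2Space Y]
    [MeasurableSpace Y] [BorelSpace Y]
    (proj : C(Y, X)) (hsurj : Function.Surjective proj)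
    (T : C(Y, ℂ) →L[ℂ] C(X, ℂ)) (hunital : T 1 = 1) (hnorm : ‖T‖ = 1)
    (hTid : ∀ g : C(X, ℂ), T (g.comp proj) = g)
    (μ : X → Measure Y)
    (hrep : ∀ (f : C(Y, ℂ)) (x : X), T f x = ∫ y, f y ∂(μ x)) :
    ∀ x : X, IsProbabilityMeasure (μ x) ∧ measureSupport (μ x) ⊆ proj ⁻¹' {x} := by
  intro x
  -- total mass 1
  have h1 : T 1 x = ∫ y, (1 : C(Y, ℂ)) y ∂(μ x) := hrep 1 x
  rw [hunital] at h1
  simp only [ContinuousMap.one_apply] at h1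
  rw [integral_const] at h1
  have hmass : ((μ x) Set.univ).toReal = 1 := by
    rw [Complex.real_smul, mul_one] at h1
    exact_mod_cast h1.symm
  have hprob : IsProbabilityMeasure (μ x) := by
    constructor
    have hne : (μ x) Set.univ ≠ ⊤ := by
      intro h
      rw [h] at hmass; simp at hmass
    rw [← ENNReal.ofReal_toReal hne, hmass]; simp
  refine ⟨hprob, ?_⟩
  haveI := hprob
  intro y₀ hy₀
  by_contra hne
  simp only [Set.mem_preimage, Set.mem_singleton_iff] at hne
  -- Urysohn function
  obtain ⟨g, hg0, hg1, hg01⟩ := exists_continuous_zero_one_of_isClosed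
    (isClosed_singleton (x := proj y₀)) (isClosed_singleton (x := x))
    (by simp [Set.disjoint_singleton, hne])
  -- complexify
  set gC : C(X, ℂ) := ⟨fun z => (g z : ℂ), by continuity⟩ with hgC
  have hint : T (gC.comp proj) x = ∫ y, (gC.comp proj) y ∂(μ x) := hrep _ x
  rw [hTid] at hint
  have hgx : gC x = 1 := by
    simp [hgC, hg1 (Set.mem_singleton x)]
  have hreal : ∫ y, (g (proj y) : ℝ) ∂(μ x) = 1 := by
    have hcast : ∫ y, ((g (proj y) : ℝ) : ℂ) ∂(μ x) = ((∫ y, g (proj y) ∂(μ x) : ℝ) : ℂ) :=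
      integral_ofReal
    rw [hgx] at hint
    have : ((∫ y, g (proj y) ∂(μ x) : ℝ) : ℂ) = 1 := by
      rw [← hcast]; exact hint.symm
    exact_mod_cast this
  -- the nonnegative function 1 - g ∘ proj integrates to zero
  set h : Y → ℝ := fun y => 1 - g (proj y) with hh
  have hcont : Continuous h := by
    continuity
  have hintg : Integrable h (μ x) := hcont.integrable_of_hasCompactSupport (HasCompactSupport.of_compactSpace h)
  have hzero : ∫ y, h y ∂(μ x) = 0 := by
    rw [hh]
    have hgi : Integrable (fun y => g (proj y)) (μ x) :=
      Continuous.integrable_of_hasCompactSupport (g.continuous.comp proj.continuous)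
        (HasCompactSupport.of_compactSpace _)
    rw [integral_sub (integrable_const 1) hgi]
    simp [hreal]
  have hae : h =ᵐ[μ x] 0 := by
    have hnn : 0 ≤ᵐ[μ x] h := Filter.Eventually.of_forall fun y => by
      have := (hg01 (proj y)).2
      simp [hh]; linarith
    exact (integral_eq_zero_iff_of_nonneg_ae hnn hintg).mp hzero
  have hnull : (μ x) {y | h y ≠ 0} = 0 := by
    have := hae
    rw [Filter.EventuallyEq, ae_iff] at this
    simpa using this
  set W : Set Y := {y | g (proj y) < 1} with hW
  have hWopen : IsOpen W := isOpen_lt (g.continuous.comp proj.continuous) continuous_const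
  have hWsub : W ⊆ {y | h y ≠ 0} := fun y hy => by
    simp only [hW, Set.mem_setOf_eq] at hy
    simp only [Set.mem_setOf_eq, hh]
    intro habs; linarith
  have hWnull : (μ x) W = 0 := measure_mono_null hWsub hnull
  have hy₀W : y₀ ∈ W := by
    simp only [hW, Set.mem_setOf_eq]
    have := hg0 (Set.mem_singleton (proj y₀))
    rw [this]; norm_num
  exact hy₀ W hWopen hy₀W hWnull
end

section
/- Let A be a uniform algebra on a compact Hausdorff space X, B a uniform algebra on Y, and Π : Y → X a continuous surjection with Π*(A) ⊆ B. If E ⊆ X is an intersection of peak sets for A, then Π⁻¹(E) is an intersection of peak sets for B. Consequently, if x is a strong boundary point for A and y is a strong boundary point for the fibre algebra B_x on Π⁻¹({x}), then y is a strong boundary point for B. -/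
/-!
Peak functions pull back along `proj`, which gives the first claim. For the second, let
`F = proj ⁻¹' {x}`, a weak peak set for `B`. A peak function of the fibre algebra at `y`,
approximated on `F` by some `b ∈ B`, is cut off outside a neighbourhood of `F` by a function of `B`
that is `1` on `F` and small off that neighbourhood; normalising at `y` gives, for every closed
`C ∌ y` and `δ > 0`, some `g ∈ B` with `g y = 1`, `|g| ≤ 1 + δ`, and `|g| ≤ δ` on `C`. Bishop's
series `∑ 2⁻ᵏ⁻¹ gₖ`, in which `gₖ` is also small wherever an earlier `gⱼ` exceeds `1 + 2⁻ᵏ⁻²`,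
turns these into functions of sup norm `1` peaking at `y`, which separate `y` from every other
point.
-/
/-- A uniform algebra: closed, point-separating, unital subalgebra of C(Z, ℂ). -/
def IsUniformAlgebra {Z : Type*} [TopologicalSpace Z] [CompactSpace Z] [T2Space Z]
    (A : Subalgebra ℂ C(Z, ℂ)) : Prop :=
  IsClosed (A : Set C(Z, ℂ)) ∧ ∀ z w : Z, z ≠ w → ∃ f ∈ A, f z ≠ f w

/-- `E` is a peak set for `A`. -/
def IsPeakSet {Z : Type*} [TopologicalSpace Z]
    (A : Subalgebra ℂ C(Z, ℂ)) (E : Set Z) : Prop :=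
  ∃ f ∈ A, (∀ z ∈ E, f z = 1) ∧ ∀ z ∉ E, ‖f z‖ < 1

/-- `E` is a peak set in the weak sense for `A`: an intersection of a family of peak sets. -/
def IsWeakPeakSet {Z : Type*} [TopologicalSpace Z]
    (A : Subalgebra ℂ C(Z, ℂ)) (E : Set Z) : Prop :=
  ∃ F : Set (Set Z), (∀ S ∈ F, IsPeakSet A S) ∧ E = ⋂₀ F

/-- `z` is a strong boundary point for `A`: `{z}` is a peak set in the weak sense. -/
def IsStrongBoundaryPoint {Z : Type*} [TopologicalSpace Z]
    (A : Subalgebra ℂ C(Z, ℂ)) (z : Z) : Prop :=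
  IsWeakPeakSet A {z}

/-- The uniform closure of the restriction of `B` to the fibre of `proj` over `x`. -/
noncomputable def fibreAlgebra {X Y : Type*} [TopologicalSpace X] [T2Space X]
    [TopologicalSpace Y] [CompactSpace Y]
    (B : Subalgebra ℂ C(Y, ℂ)) (proj : C(Y, X)) (x : X) :
    Subalgebra ℂ C((proj ⁻¹' {x} : Set Y), ℂ) :=
  haveI : CompactSpace (proj ⁻¹' {x} : Set Y) :=
    isCompact_iff_compactSpace.mp (isClosed_singleton.preimage proj.continuous).isCompact
  (B.map (ContinuousMap.compRightAlgHom ℂ ℂ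
    ⟨Subtype.val, continuous_subtype_val⟩)).topologicalClosure

open Set

section PeakSets

variable {Z : Type*} [TopologicalSpace Z] {B : Subalgebra ℂ C(Z, ℂ)}

theorem norm_le_one_of_peaks {S : Set Z} {f : C(Z, ℂ)} (hf1 : ∀ z ∈ S, f z = 1)
    (hflt : ∀ z ∉ S, ‖f z‖ < 1) (z : Z) : ‖f z‖ ≤ 1 := by
  by_cases hz : z ∈ S
  · simp [hf1 z hz]
  · exact (hflt z hz).le

theorem IsPeakSet.isClosed {S : Set Z} (hS : IsPeakSet B S) : IsClosed S := by
  obtain ⟨f, -, hf1, hflt⟩ := hS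
  convert isClosed_eq f.continuous continuous_const using 1
  ext z
  refine ⟨hf1 z, fun hz => by_contra fun hzS => ?_⟩
  simpa [show f z = 1 from hz] using hflt z hzS

theorem isPeakSet_univ : IsPeakSet B univ :=
  ⟨1, one_mem B, fun _ _ => rfl, fun _ hz => absurd (mem_univ _) hz⟩

theorem IsPeakSet.inter {S T : Set Z} (hS : IsPeakSet B S) (hT : IsPeakSet B T) :
    IsPeakSet B (S ∩ T) := by
  obtain ⟨f, hfB, hf1, hflt⟩ := hS
  obtain ⟨g, hgB, hg1, hglt⟩ := hT
  refine ⟨f * g, mul_mem hfB hgB, fun z hz => by simp [hf1 z hz.1, hg1 z hz.2], fun z hz => ?_⟩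
  rw [ContinuousMap.mul_apply, norm_mul]
  rcases not_and_or.mp hz with hzS | hzT
  · exact mul_lt_one_of_nonneg_of_lt_one_left (norm_nonneg _) (hflt z hzS)
      (norm_le_one_of_peaks hg1 hglt z)
  · exact mul_lt_one_of_nonneg_of_lt_one_right (norm_le_one_of_peaks hf1 hflt z)
      (norm_nonneg _) (hglt z hzT)

theorem isPeakSet_biInter_finset {ι : Type*} (s : Finset ι) {t : ι → Set Z}
    (h : ∀ i ∈ s, IsPeakSet B (t i)) : IsPeakSet B (⋂ i ∈ s, t i) := by
  classical
  induction s using Finset.induction_on with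
  | empty => simpa using isPeakSet_univ
  | insert i s _ ih =>
    rw [Finset.set_biInter_insert]
    exact (h i (Finset.mem_insert_self i s)).inter
      (ih fun j hj => h j (Finset.mem_insert_of_mem hj))

theorem isPeakSet_setOf_eq_one {f : C(Z, ℂ)} (hfB : f ∈ B) (hf : ∀ z, ‖f z‖ ≤ 1) :
    IsPeakSet B {z | f z = 1} := by
  refine ⟨(2⁻¹ : ℂ) • (1 + f), B.smul_mem (add_mem (one_mem B) hfB) _,
    fun z hz => by norm_num [show f z = 1 from hz], fun z hz => ?_⟩
  -- strict convexity of the unit disc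
  have hmid := norm_combo_lt_of_ne (x := (1 : ℂ)) (y := f z) (a := 1 / 2) (b := 1 / 2)
    (by simp) (hf z) (Ne.symm hz) (by norm_num) (by norm_num) (by norm_num)
  have hval : ((2⁻¹ : ℂ) • (1 + f)) z = (1 / 2 : ℝ) • (1 : ℂ) + (1 / 2 : ℝ) • f z := by
    simp [Complex.real_smul]
    ring
  rwa [hval]

theorem isStrongBoundaryPoint_of_forall_ne {y : Z}
    (h : ∀ z ≠ y, ∃ S, IsPeakSet B S ∧ y ∈ S ∧ z ∉ S) : IsStrongBoundaryPoint B y := by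
  refine ⟨{S | IsPeakSet B S ∧ y ∈ S}, fun S hS => hS.1, ?_⟩
  ext z
  simp only [mem_singleton_iff, mem_sInter, mem_ofPred_eq]
  refine ⟨fun hz S hS => hz ▸ hS.2, fun hz => by_contra fun hzy => ?_⟩
  obtain ⟨S, hS, hyS, hzS⟩ := h z hzy
  exact hzS (hz S ⟨hS, hyS⟩)

theorem IsPeakSet.preimage {X : Type*} [TopologicalSpace X] {A : Subalgebra ℂ C(X, ℂ)}
    {S : Set X} (hS : IsPeakSet A S) (φ : C(Z, X)) (hφ : ∀ g ∈ A, g.comp φ ∈ B) :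
    IsPeakSet B (φ ⁻¹' S) := by
  obtain ⟨f, hfA, hf1, hflt⟩ := hS
  exact ⟨f.comp φ, hφ f hfA, fun z hz => hf1 _ hz, fun z hz => hflt _ hz⟩

theorem IsWeakPeakSet.preimage {X : Type*} [TopologicalSpace X] {A : Subalgebra ℂ C(X, ℂ)}
    {E : Set X} (hE : IsWeakPeakSet A E) (φ : C(Z, X)) (hφ : ∀ g ∈ A, g.comp φ ∈ B) :
    IsWeakPeakSet B (φ ⁻¹' E) := by
  obtain ⟨𝓕, h𝓕, rfl⟩ := hE
  refine ⟨(φ ⁻¹' ·) '' 𝓕, ?_, by rw [sInter_image, preimage_sInter]⟩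
  rintro _ ⟨S, hS, rfl⟩
  exact (h𝓕 S hS).preimage φ hφ

variable [CompactSpace Z]

theorem IsWeakPeakSet.exists_isPeakSet_subset {F V : Set Z} (hF : IsWeakPeakSet B F)
    (hV : IsOpen V) (hFV : F ⊆ V) : ∃ S, IsPeakSet B S ∧ F ⊆ S ∧ S ⊆ V := by
  obtain ⟨𝓕, h𝓕, rfl⟩ := hF
  obtain ⟨u, hu⟩ := hV.isClosed_compl.isCompact.elim_finite_subfamily_closed
    (fun S : 𝓕 => (S : Set Z)) (fun S => (h𝓕 S S.2).isClosed) <| by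
      rw [← sInter_eq_iInter]
      exact eq_empty_of_forall_notMem fun z hz => hz.1 (hFV hz.2)
  refine ⟨⋂ S ∈ u, (S : Set Z), isPeakSet_biInter_finset u fun S _ => h𝓕 S S.2,
    subset_iInter₂ fun S _ => sInter_subset_of_mem S.2, fun z hz => by_contra fun hzV => ?_⟩
  exact eq_empty_iff_forall_notMem.mp hu z ⟨hzV, hz⟩

theorem IsPeakSet.exists_norm_le_of_subset {S V : Set Z} (hS : IsPeakSet B S) (hV : IsOpen V)
    (hSV : S ⊆ V) {ε : ℝ} (hε : 0 < ε) :
    ∃ q ∈ B, (∀ z, ‖q z‖ ≤ 1) ∧ (∀ z ∈ S, q z = 1) ∧ ∀ z ∉ V, ‖q z‖ ≤ ε := by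
  obtain ⟨f, hfB, hf1, hflt⟩ := hS
  obtain ⟨r, hr1, hfr⟩ : ∃ r < 1, ∀ z ∉ V, ‖f z‖ ≤ r := by
    rcases (Vᶜ).eq_empty_or_nonempty with hVc | hVc
    · exact ⟨0, one_pos, fun z hz => absurd hz (eq_empty_iff_forall_notMem.mp hVc z)⟩
    · obtain ⟨z₀, hz₀, hmax⟩ := hV.isClosed_compl.isCompact.exists_isMaxOn hVc
        f.continuous.norm.continuousOn
      exact ⟨‖f z₀‖, hflt z₀ fun h => hz₀ (hSV h), fun z hz => hmax hz⟩
  obtain ⟨n, hn⟩ := exists_pow_lt_of_lt_one hε hr1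
  refine ⟨f ^ n, pow_mem hfB n, fun z => ?_, fun z hz => by simp [hf1 z hz], fun z hz => ?_⟩
  · simpa using pow_le_one₀ (norm_nonneg _) (norm_le_one_of_peaks hf1 hflt z)
  · rw [ContinuousMap.pow_apply, norm_pow]
    exact (pow_le_pow_left₀ (norm_nonneg _) (hfr z hz) n).trans hn.le

theorem IsWeakPeakSet.exists_norm_le_of_subset {F V : Set Z} (hF : IsWeakPeakSet B F)
    (hV : IsOpen V) (hFV : F ⊆ V) {ε : ℝ} (hε : 0 < ε) :
    ∃ q ∈ B, (∀ z, ‖q z‖ ≤ 1) ∧ (∀ z ∈ F, q z = 1) ∧ ∀ z ∉ V, ‖q z‖ ≤ ε := by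
  obtain ⟨S, hS, hFS, hSV⟩ := hF.exists_isPeakSet_subset hV hFV
  obtain ⟨q, hqB, hq1, hqS, hqV⟩ := hS.exists_norm_le_of_subset hV hSV hε
  exact ⟨q, hqB, hq1, fun z hz => hqS z (hFS hz), hqV⟩

theorem IsWeakPeakSet.exists_localization {F V : Set Z} (hF : IsWeakPeakSet B F)
    (hV : IsOpen V) (hFV : F ⊆ V) {b : C(Z, ℂ)} (hb : b ∈ B) {ε : ℝ} (hε : 0 < ε) :
    ∃ g ∈ B, (∀ z ∈ F, g z = b z) ∧ (∀ z, ‖g z‖ ≤ ‖b z‖) ∧ ∀ z ∉ V, ‖g z‖ ≤ ε := by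
  have hb₁ : 0 < ‖b‖ + 1 := by positivity
  obtain ⟨q, hqB, hq1, hqF, hqV⟩ := hF.exists_norm_le_of_subset hV hFV (div_pos hε hb₁)
  refine ⟨b * q, mul_mem hb hqB, fun z hz => by simp [hqF z hz], fun z => ?_, fun z hz => ?_⟩
  · rw [ContinuousMap.mul_apply, norm_mul]
    exact mul_le_of_le_one_right (norm_nonneg _) (hq1 z)
  · calc ‖(b * q) z‖ = ‖b z‖ * ‖q z‖ := by rw [ContinuousMap.mul_apply, norm_mul]
      _ ≤ (‖b‖ + 1) * (ε / (‖b‖ + 1)) :=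
        mul_le_mul ((b.norm_coe_le_norm z).trans (le_add_of_nonneg_right zero_le_one))
          (hqV z hz) (norm_nonneg _) hb₁.le
      _ = ε := mul_div_cancel₀ _ hb₁.ne'

end PeakSets

section BishopSeries

theorem one_half_pow_le_one_half_pow {m n : ℕ} (h : m ≤ n) : (1 / 2 : ℝ) ^ n ≤ (1 / 2) ^ m :=
  pow_le_pow_of_le_one (by norm_num) (by norm_num) h

theorem hasSum_half_pow_succ : HasSum (fun k : ℕ => (1 / 2 : ℝ) ^ (k + 1)) 1 := by
  simpa [pow_succ', ← mul_assoc] using hasSum_geometric_two.mul_left (1 / 2 : ℝ)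

theorem summable_half_pow_succ_mul {a : ℕ → ℝ} (h0 : ∀ k, 0 ≤ a k) (h2 : ∀ k, a k ≤ 2) :
    Summable fun k => (1 / 2 : ℝ) ^ (k + 1) * a k :=
  (hasSum_half_pow_succ.summable.mul_left 2).of_nonneg_of_le
    (fun k => mul_nonneg (by positivity) (h0 k))
    (fun k => by rw [mul_comm 2]; exact mul_le_mul_of_nonneg_left (h2 k) (by positivity))

theorem tsum_half_pow_succ_mul_le_one_of_split {a : ℕ → ℝ} (N : ℕ) (h0 : ∀ k, 0 ≤ a k)
    (hlt : ∀ k < N, a k ≤ 1 + (1 / 2) ^ (N + 1)) (hge : ∀ k, N ≤ k → a k ≤ 1 / 2) :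
    ∑' k, (1 / 2 : ℝ) ^ (k + 1) * a k ≤ 1 := by
  have hN : (0 : ℝ) ≤ (1 / 2) ^ N := by positivity
  have hw := hasSum_half_pow_succ.summable
  have hsplit := hw.sum_add_tsum_nat_add N
  have hw_tail : ∑' k, (1 / 2 : ℝ) ^ (k + N + 1) = (1 / 2) ^ N := by
    simp_rw [add_right_comm _ N, pow_add _ _ N, tsum_mul_right, hasSum_half_pow_succ.tsum_eq,
      one_mul]
  have hhead : ∑ k ∈ Finset.range N, (1 / 2 : ℝ) ^ (k + 1) * a k ≤
      (∑ k ∈ Finset.range N, (1 / 2 : ℝ) ^ (k + 1)) * (1 + (1 / 2) ^ (N + 1)) := by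
    rw [Finset.sum_mul]
    exact Finset.sum_le_sum fun k hk =>
      mul_le_mul_of_nonneg_left (hlt k (Finset.mem_range.mp hk)) (by positivity)
  have hs : Summable fun k => (1 / 2 : ℝ) ^ (k + 1) * a k := by
    refine summable_half_pow_succ_mul h0 fun k => ?_
    rcases lt_or_ge k N with hk | hk
    · linarith [hlt k hk, pow_le_one₀ (n := N + 1) (by norm_num : (0 : ℝ) ≤ 1 / 2) (by norm_num)]
    · linarith [hge k hk]
  have htail : ∑' k, (1 / 2 : ℝ) ^ (k + N + 1) * a (k + N) ≤ (1 / 2) ^ N * (1 / 2) := by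
    rw [← hw_tail, ← tsum_mul_right]
    exact ((summable_nat_add_iff N).mpr hs).tsum_le_tsum
      (fun k => mul_le_mul_of_nonneg_left (hge _ (Nat.le_add_left N k)) (by positivity))
      (((summable_nat_add_iff N).mpr hw).mul_right _)
  rw [← hs.sum_add_tsum_nat_add N]
  rw [hasSum_half_pow_succ.tsum_eq, hw_tail] at hsplit
  rw [pow_succ] at hhead
  nlinarith

/-- Take `N` least such that some `a j` exceeds `1 + 2⁻ᴺ⁻²`: then every term is at most
`1 + 2⁻ᴺ⁻¹`, and `j < N`, so `a k ≤ 2⁻ᵏ⁻²` for all `k ≥ N`. -/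
theorem tsum_half_pow_succ_mul_le_one {a : ℕ → ℝ} (h0 : ∀ k, 0 ≤ a k)
    (hle : ∀ k, a k ≤ 1 + (1 / 2) ^ (k + 2))
    (hdrop : ∀ j k, j < k → 1 + (1 / 2) ^ (k + 2) ≤ a j → a k ≤ (1 / 2) ^ (k + 2)) :
    ∑' k, (1 / 2 : ℝ) ^ (k + 1) * a k ≤ 1 := by
  by_cases hbig : ∃ j, 1 < a j
  · obtain ⟨j, hj⟩ := hbig
    have hP : ∃ n, ∃ j, 1 + (1 / 2 : ℝ) ^ (n + 2) < a j := by
      obtain ⟨n, hn⟩ := exists_pow_lt_of_lt_one (sub_pos.mpr hj) (by norm_num : (1 / 2 : ℝ) < 1)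
      refine ⟨n, j, ?_⟩
      linarith [one_half_pow_le_one_half_pow (Nat.le_add_right n 2)]
    classical
    obtain ⟨i, hi⟩ := Nat.find_spec hP
    refine tsum_half_pow_succ_mul_le_one_of_split (Nat.find hP) h0 (fun k _ => ?_) fun k hk => ?_
    · rcases hN : Nat.find hP with _ | n
      · linarith [hle k, one_half_pow_le_one_half_pow (Nat.le_add_left 1 (k + 1))]
      · have hmin := Nat.find_min hP (m := n) (by omega)
        simp only [not_exists, not_lt] at hmin
        exact hmin k
    · have hiN : i < Nat.find hP := by
        have := (hle i).trans_lt' hi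
        rwa [add_lt_add_iff_left, pow_lt_pow_iff_right_of_lt_one₀ (by norm_num) (by norm_num),
          add_lt_add_iff_right] at this
      have hk' := hdrop i k (hiN.trans_le hk) (by
        linarith [one_half_pow_le_one_half_pow (Nat.add_le_add_right hk 2)])
      linarith [one_half_pow_le_one_half_pow (Nat.le_add_left 1 (k + 1))]
  · simp only [not_exists, not_lt] at hbig
    calc ∑' k, (1 / 2 : ℝ) ^ (k + 1) * a k ≤ ∑' k, (1 / 2 : ℝ) ^ (k + 1) :=
          (summable_half_pow_succ_mul h0 fun k => by linarith [hbig k]).tsum_le_tsum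
            (fun k => mul_le_of_le_one_right (by positivity) (hbig k))
            hasSum_half_pow_succ.summable
      _ = 1 := hasSum_half_pow_succ.tsum_eq

end BishopSeries

section AlmostPeakPoints

variable {Z : Type*} [TopologicalSpace Z] {B : Subalgebra ℂ C(Z, ℂ)}

def IsAlmostPeakPoint (B : Subalgebra ℂ C(Z, ℂ)) (y : Z) : Prop :=
  ∀ C : Set Z, IsClosed C → y ∉ C → ∀ ε > 0,
    ∃ g ∈ B, g y = 1 ∧ (∀ z, ‖g z‖ ≤ 1 + ε) ∧ ∀ z ∈ C, ‖g z‖ ≤ ε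

variable {y : Z}

theorem IsAlmostPeakPoint.exists_seq (hy : IsAlmostPeakPoint B y) {K : Set Z} (hK : IsClosed K)
    (hyK : y ∉ K) :
    ∃ g : ℕ → C(Z, ℂ), ∀ k, g k ∈ B ∧ g k y = 1 ∧ (∀ z, ‖g k z‖ ≤ 1 + (1 / 2) ^ (k + 2)) ∧
      (∀ z ∈ K, ‖g k z‖ ≤ (1 / 2) ^ (k + 2)) ∧
      ∀ j < k, ∀ z, 1 + (1 / 2) ^ (k + 2) ≤ ‖g j z‖ → ‖g k z‖ ≤ (1 / 2) ^ (k + 2) := by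
  choose! pick hpick using fun (k : ℕ) (C : Set Z) (hC : IsClosed C) (hyC : y ∉ C) =>
    hy C hC hyC ((1 / 2 : ℝ) ^ (k + 2)) (by positivity)
  let g : ℕ → C(Z, ℂ) := Nat.strongRec fun k g =>
    pick k (K ∪ ⋃ j, ⋃ h : j < k, {z | 1 + (1 / 2 : ℝ) ^ (k + 2) ≤ ‖g j h z‖})
  have hg : ∀ k, g k ∈ B ∧ g k y = 1 ∧ (∀ z, ‖g k z‖ ≤ 1 + (1 / 2) ^ (k + 2)) ∧
      ∀ z ∈ K ∪ ⋃ j < k, {z | 1 + (1 / 2 : ℝ) ^ (k + 2) ≤ ‖g j z‖},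
        ‖g k z‖ ≤ (1 / 2) ^ (k + 2) := by
    intro k
    induction k using Nat.strong_induction_on with | _ k ih =>
    rw [show g k = _ from Nat.strongRec_eq _ k]
    refine hpick k _ (hK.union ((Set.finite_lt_nat k).isClosed_biUnion fun j _ =>
      isClosed_le continuous_const (g j).continuous.norm)) ?_
    rintro (hyK' | hyU)
    · exact hyK hyK'
    · obtain ⟨j, hj, hjy⟩ := mem_iUnion₂.mp hyU
      have hjy' : 1 + (1 / 2 : ℝ) ^ (k + 2) ≤ ‖g j y‖ := hjy
      rw [(ih j hj).2.1, norm_one] at hjy'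
      linarith [show (0 : ℝ) < (1 / 2) ^ (k + 2) by positivity]
  refine ⟨g, fun k => ⟨(hg k).1, (hg k).2.1, (hg k).2.2.1, fun z hz => (hg k).2.2.2 z (.inl hz),
    fun j hj z hz => (hg k).2.2.2 z (.inr (mem_iUnion₂.mpr ⟨j, hj, hz⟩))⟩⟩

theorem IsAlmostPeakPoint.exists_peakFunction [CompactSpace Z] (hy : IsAlmostPeakPoint B y)
    (hB : IsClosed (B : Set C(Z, ℂ))) {K : Set Z} (hK : IsClosed K) (hyK : y ∉ K) :
    ∃ f ∈ B, (∀ z, ‖f z‖ ≤ 1) ∧ f y = 1 ∧ ∀ z ∈ K, f z ≠ 1 := by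
  obtain ⟨g, hg⟩ := hy.exists_seq hK hyK
  have hhalf : ∀ k, (1 / 2 : ℝ) ^ (k + 2) ≤ 1 / 2 := fun k =>
    (one_half_pow_le_one_half_pow (Nat.le_add_left 1 (k + 1))).trans_eq (pow_one _)
  have hg2 : ∀ k z, ‖g k z‖ ≤ 2 := fun k z => by linarith [(hg k).2.2.1 z, hhalf k]
  have hsum : Summable fun k => (((1 / 2 : ℝ) ^ (k + 1) : ℝ) : ℂ) • g k := by
    refine .of_norm_bounded (hasSum_half_pow_succ.summable.mul_left 2) fun k => ?_
    rw [norm_smul, Complex.norm_of_nonneg (by positivity), mul_comm 2]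
    exact mul_le_mul_of_nonneg_left ((ContinuousMap.norm_le _ zero_le_two).mpr (hg2 k))
      (by positivity)
  have happly : ∀ z, HasSum (fun k => (((1 / 2 : ℝ) ^ (k + 1) : ℝ) : ℂ) * g k z)
      ((∑' k, (((1 / 2 : ℝ) ^ (k + 1) : ℝ) : ℂ) • g k) z) := fun z => by
    simpa using ContinuousMap.hasSum_apply hsum.hasSum z
  have hnorm : ∀ z, ‖(∑' k, (((1 / 2 : ℝ) ^ (k + 1) : ℝ) : ℂ) • g k) z‖ ≤
      ∑' k, (1 / 2 : ℝ) ^ (k + 1) * ‖g k z‖ := fun z =>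
    (happly z).norm_le_of_bounded
      (summable_half_pow_succ_mul (fun k => norm_nonneg _) (hg2 · z)).hasSum fun k => by
        rw [norm_mul, Complex.norm_of_nonneg (by positivity)]
  refine ⟨_, tsum_mem hB fun k => B.smul_mem (hg k).1 _, fun z => (hnorm z).trans ?_, ?_,
    fun z hz hz1 => ?_⟩
  · exact tsum_half_pow_succ_mul_le_one (fun k => norm_nonneg _) (fun k => (hg k).2.2.1 z)
      fun j k hjk hj => (hg k).2.2.2.2 j hjk z hj
  · refine (happly y).unique ?_
    simpa [(hg _).2.1] using Complex.hasSum_ofReal.mpr hasSum_half_pow_succ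
  · have hsmall : ∑' k, (1 / 2 : ℝ) ^ (k + 1) * ‖g k z‖ ≤ ∑' k, (1 / 2 : ℝ) ^ (k + 1) * (1 / 2) :=
      (summable_half_pow_succ_mul (fun k => norm_nonneg _) (hg2 · z)).tsum_le_tsum
        (fun k => mul_le_mul_of_nonneg_left (((hg k).2.2.2.1 z hz).trans (hhalf k))
          (by positivity))
        (hasSum_half_pow_succ.summable.mul_right _)
    rw [tsum_mul_right, hasSum_half_pow_succ.tsum_eq] at hsmall
    have := (hnorm z).trans hsmall
    rw [hz1, norm_one] at this
    norm_num at this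

theorem IsAlmostPeakPoint.isStrongBoundaryPoint [CompactSpace Z] [T1Space Z]
    (hy : IsAlmostPeakPoint B y) (hB : IsClosed (B : Set C(Z, ℂ))) :
    IsStrongBoundaryPoint B y := by
  refine isStrongBoundaryPoint_of_forall_ne fun z hzy => ?_
  obtain ⟨f, hfB, hf1, hfy, hfz⟩ := hy.exists_peakFunction hB isClosed_singleton hzy.symm
  exact ⟨{w | f w = 1}, isPeakSet_setOf_eq_one hfB hf1, hfy, hfz z rfl⟩

theorem exists_eq_one_norm_le_div {g : C(Z, ℂ)} (hg : g ∈ B) {ε : ℝ} (hε : ε < 1)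
    (hgy : ‖g y - 1‖ ≤ ε) : ∃ h ∈ B, h y = 1 ∧ ∀ z, ‖h z‖ ≤ ‖g z‖ / (1 - ε) := by
  have hgy' : 1 - ε ≤ ‖g y‖ := by
    linarith [norm_le_norm_add_norm_sub' (1 : ℂ) (g y), norm_sub_rev (1 : ℂ) (g y),
      norm_one (α := ℂ)]
  have hgy0 : g y ≠ 0 := norm_pos_iff.mp (by linarith)
  refine ⟨(g y)⁻¹ • g, B.smul_mem hg _, by simp [hgy0], fun z => ?_⟩
  rw [ContinuousMap.smul_apply, smul_eq_mul, norm_mul, norm_inv, inv_mul_eq_div]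
  exact div_le_div_of_nonneg_left (norm_nonneg _) (by linarith) hgy'

end AlmostPeakPoints

section Fibres

variable {X Y : Type*} [TopologicalSpace X] [T2Space X] [TopologicalSpace Y] [CompactSpace Y]
  {B : Subalgebra ℂ C(Y, ℂ)} {proj : C(Y, X)} {x : X} {y : proj ⁻¹' {x}}

theorem IsStrongBoundaryPoint.exists_approx_of_fibreAlgebra
    (hy : IsStrongBoundaryPoint (fibreAlgebra B proj x) y) {C : Set Y} (hC : IsClosed C)
    (hyC : (y : Y) ∉ C) {ε : ℝ} (hε : 0 < ε) :
    ∃ b ∈ B, ‖b y - 1‖ < ε ∧ (∀ z ∈ proj ⁻¹' {x}, ‖b z‖ < 1 + ε) ∧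
      ∀ z ∈ proj ⁻¹' {x} ∩ C, ‖b z‖ < 2 * ε := by
  have : CompactSpace (proj ⁻¹' {x} : Set Y) :=
    isCompact_iff_compactSpace.mp (isClosed_singleton.preimage proj.continuous).isCompact
  obtain ⟨q, hqB, hq1, hqy, hqC⟩ := IsWeakPeakSet.exists_norm_le_of_subset hy
    (hC.preimage continuous_subtype_val).isOpen_compl (singleton_subset_iff.mpr hyC) hε
  have hq : q ∈ closure (B.map (ContinuousMap.compRightAlgHom ℂ ℂ
      (⟨Subtype.val, continuous_subtype_val⟩ : C(proj ⁻¹' {x}, Y))) : Set C(proj ⁻¹' {x}, ℂ)) := by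
    rw [← Subalgebra.topologicalClosure_coe]
    exact hqB
  obtain ⟨_, hb, hbq⟩ := Metric.mem_closure_iff.mp hq ε hε
  obtain ⟨b, hbB, rfl⟩ := Subalgebra.mem_map.mp hb
  have hclose : ∀ z : proj ⁻¹' {x}, ‖b z - q z‖ < ε := fun z => by
    rw [← dist_eq_norm, dist_comm]
    exact (ContinuousMap.dist_apply_le_dist z).trans_lt hbq
  refine ⟨b, hbB, by simpa [hqy y rfl] using hclose y, fun z hz => ?_, fun z hz => ?_⟩
  · linarith [norm_le_norm_add_norm_sub' (b z) (q ⟨z, hz⟩), hclose ⟨z, hz⟩, hq1 ⟨z, hz⟩]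
  · linarith [norm_le_norm_add_norm_sub' (b z) (q ⟨z, hz.1⟩), hclose ⟨z, hz.1⟩,
      hqC ⟨z, hz.1⟩ (not_not_intro hz.2)]

theorem IsStrongBoundaryPoint.isAlmostPeakPoint_of_fibreAlgebra
    (hfib : IsWeakPeakSet B (proj ⁻¹' {x}))
    (hy : IsStrongBoundaryPoint (fibreAlgebra B proj x) y) : IsAlmostPeakPoint B y := by
  intro C hC hyC δ hδ
  set ε := min δ 1 / 3 with hε_def
  have hε : 0 < ε := by positivity
  have hεδ : 3 * ε ≤ δ := by rw [hε_def]; linarith [min_le_left δ 1]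
  have hε1 : 3 * ε ≤ 1 := by rw [hε_def]; linarith [min_le_right δ 1]
  obtain ⟨b, hbB, hby, hbF, hbC⟩ := hy.exists_approx_of_fibreAlgebra hC hyC hε
  -- a neighbourhood of the fibre on which `b` keeps the bounds it has on the fibre
  let V : Set Y := {z | ‖b z‖ < 1 + ε} ∩ (Cᶜ ∪ {z | ‖b z‖ < 2 * ε})
  have hV : IsOpen V := (isOpen_lt b.continuous.norm continuous_const).inter
    (hC.isOpen_compl.union (isOpen_lt b.continuous.norm continuous_const))
  have hFV : proj ⁻¹' {x} ⊆ V := fun z hz =>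
    ⟨hbF z hz, (em (z ∈ C)).elim (fun hzC => .inr (hbC z ⟨hz, hzC⟩)) .inl⟩
  obtain ⟨g, hgB, hgF, hgb, hgV⟩ := hfib.exists_localization hV hFV hbB hε
  have hg1 : ∀ z, ‖g z‖ ≤ 1 + ε := fun z => by
    by_cases hz : z ∈ V
    · exact (hgb z).trans hz.1.le
    · linarith [hgV z hz]
  have hgC : ∀ z ∈ C, ‖g z‖ ≤ 2 * ε := fun z hzC => by
    by_cases hz : z ∈ V
    · exact (hgb z).trans (hz.2.resolve_left (not_not_intro hzC)).le
    · linarith [hgV z hz]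
  obtain ⟨h, hhB, hhy, hh⟩ := exists_eq_one_norm_le_div hgB (y := (y : Y))
    (ε := ε) (by linarith) (by rw [hgF y y.2]; exact hby.le)
  refine ⟨h, hhB, hhy, fun z => (hh z).trans ?_, fun z hz => (hh z).trans ?_⟩
  · rw [div_le_iff₀ (by linarith)]
    nlinarith [hg1 z]
  · rw [div_le_iff₀ (by linarith)]
    nlinarith [hgC z hz]

end Fibres

theorem weak_peak_sets_and_strong_boundary_points_lift_general {X Y : Type*}
    [TopologicalSpace X] [T2Space X]
    [TopologicalSpace Y] [CompactSpace Y] [T2Space Y]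
    (A : Subalgebra ℂ C(X, ℂ))
    (B : Subalgebra ℂ C(Y, ℂ)) (hB : IsUniformAlgebra B)
    (proj : C(Y, X))
    (hext : ∀ g : C(X, ℂ), g ∈ A → g.comp proj ∈ B) :
    (∀ E : Set X, IsWeakPeakSet A E → IsWeakPeakSet B (proj ⁻¹' E)) ∧
    (∀ (x : X) (y : (proj ⁻¹' {x} : Set Y)),
      IsStrongBoundaryPoint A x → IsStrongBoundaryPoint (fibreAlgebra B proj x) y →
        IsStrongBoundaryPoint B (y : Y)) := by
  have hlift : ∀ E : Set X, IsWeakPeakSet A E → IsWeakPeakSet B (proj ⁻¹' E) :=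
    fun E hE => hE.preimage proj hext
  refine ⟨hlift, fun x y hx hy => ?_⟩
  exact (hy.isAlmostPeakPoint_of_fibreAlgebra (hlift {x} hx)).isStrongBoundaryPoint hB.1

theorem weak_peak_sets_and_strong_boundary_points_lift {X Y : Type*}
    [TopologicalSpace X] [CompactSpace X] [T2Space X]
    [TopologicalSpace Y] [CompactSpace Y] [T2Space Y]
    (A : Subalgebra ℂ C(X, ℂ)) (hA : IsUniformAlgebra A)
    (B : Subalgebra ℂ C(Y, ℂ)) (hB : IsUniformAlgebra B)
    (proj : C(Y, X)) (hsurj : Function.Surjective proj)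
    (hext : ∀ g : C(X, ℂ), g ∈ A → g.comp proj ∈ B) :
    (∀ E : Set X, IsWeakPeakSet A E → IsWeakPeakSet B (proj ⁻¹' E)) ∧
    (∀ (x : X) (y : (proj ⁻¹' {x} : Set Y)),
      IsStrongBoundaryPoint A x → IsStrongBoundaryPoint (fibreAlgebra B proj x) y →
        IsStrongBoundaryPoint B (y : Y)) :=
  weak_peak_sets_and_strong_boundary_points_lift_general A B hB proj hext
end

section
/- Let A be a uniform algebra on a compact Hausdorff space X and B a uniform algebra extension of A on Y whose associated continuous surjection Π : Y → X is an open map. Then for each x in the Shilov boundary of A, the Shilov boundary of the fibre algebra B_x (on Π⁻¹({x})) is contained in (Shilov boundary of B) ∩ Π⁻¹({x}). -/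
/-- `S` is a closed boundary for `A`: `S` is closed and every `f ∈ A` attains its
maximum modulus at a point of `S`. -/
def IsClosedBoundary {Z : Type*} [TopologicalSpace Z]
    (A : Subalgebra ℂ C(Z, ℂ)) (S : Set Z) : Prop :=
  IsClosed S ∧ ∀ f ∈ A, ∃ z ∈ S, ∀ w : Z, ‖f w‖ ≤ ‖f z‖

/-- The Shilov boundary of `A`: the intersection of all closed boundaries for `A`. -/
def shilovBoundary {Z : Type*} [TopologicalSpace Z]
    (A : Subalgebra ℂ C(Z, ℂ)) : Set Z :=
  ⋂₀ {S : Set Z | IsClosedBoundary A S}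

/-- Peaking lemma: a point of the Shilov boundary, and any open neighbourhood V of it,
admits a function of A whose global max is attained in V and which is strictly
smaller off V, with a uniform gap. -/
lemma peaking {X : Type*} [TopologicalSpace X] [CompactSpace X] [T2Space X]
    (A : Subalgebra ℂ C(X, ℂ)) {x : X} (hx : x ∈ shilovBoundary A)
    {V : Set X} (hV : IsOpen V) (hxV : x ∈ V) :
    ∃ a ∈ A, ∃ x₁ ∈ V, ∃ r : ℝ, 0 ≤ r ∧ 0 < ‖a x₁‖ ∧ r < ‖a x₁‖ ∧
      (∀ w, ‖a w‖ ≤ ‖a x₁‖) ∧ ∀ w ∉ V, ‖a w‖ ≤ r := by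
  haveI : Nonempty X := ⟨x⟩
  by_cases hC : (Vᶜ : Set X).Nonempty
  · have hnb : ¬ IsClosedBoundary A Vᶜ := by
      intro h
      exact (hx Vᶜ h) hxV
    have hcl : IsClosed (Vᶜ : Set X) := hV.isClosed_compl
    rw [IsClosedBoundary] at hnb
    push_neg at hnb
    obtain ⟨a, haA, ha⟩ := hnb hcl
    -- global max of ‖a‖ at x₁
    obtain ⟨x₁, -, hx₁⟩ := isCompact_univ.exists_isMaxOn (Set.univ_nonempty)
      (Continuous.continuousOn (by continuity : Continuous fun w => ‖a w‖))
    have hx₁max : ∀ w, ‖a w‖ ≤ ‖a x₁‖ := fun w => hx₁ (Set.mem_univ w)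
    have hx₁V : x₁ ∈ V := by
      by_contra h
      obtain ⟨w, hw⟩ := ha x₁ h
      exact absurd (hx₁max w) (not_le.mpr hw)
    -- max of ‖a‖ on Vᶜ
    obtain ⟨w₀, hw₀C, hw₀⟩ := (hcl.isCompact).exists_isMaxOn hC
      (Continuous.continuousOn (by continuity : Continuous fun w => ‖a w‖))
    obtain ⟨w', hw'⟩ := ha w₀ hw₀C
    refine ⟨a, haA, x₁, hx₁V, ‖a w₀‖, norm_nonneg _, ?_, ?_, hx₁max, fun w hw => hw₀ hw⟩
    · exact lt_of_le_of_lt (norm_nonneg _) (lt_of_lt_of_le hw' (hx₁max w'))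
    · exact lt_of_lt_of_le hw' (hx₁max w')
  · refine ⟨1, one_mem A, x, hxV, 0, le_refl 0, ?_, ?_, ?_, ?_⟩
    · simp
    · simp
    · intro w; simp
    · intro w hw
      exact absurd ⟨w, hw⟩ hC

/-- Core lemma: for `x` in the Shilov boundary of `A` and any closed boundary `S` of `B`,
the maximum of `‖b‖` over the fibre of `x` is nearly attained on `S ∩ fibre`. -/
lemma core {X Y : Type*}
    [TopologicalSpace X] [CompactSpace X] [T2Space X]
    [TopologicalSpace Y] [CompactSpace Y] [T2Space Y]
    (A : Subalgebra ℂ C(X, ℂ)) (B : Subalgebra ℂ C(Y, ℂ))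
    (proj : C(Y, X)) (hopen : IsOpenMap proj)
    (hext : ∀ g : C(X, ℂ), g ∈ A → g.comp proj ∈ B)
    {x : X} (hx : x ∈ shilovBoundary A)
    {S : Set Y} (hS : IsClosedBoundary B S)
    {b : C(Y, ℂ)} (hb : b ∈ B) {ym : Y} (hym : proj ym = x)
    {δ : ℝ} (hδ : 0 < δ) (hδm : δ < ‖b ym‖) :
    ∃ y ∈ S, proj y = x ∧ ‖b ym‖ - δ ≤ ‖b y‖ := by
  by_contra H
  push_neg at H
  set m := ‖b ym‖ with hm
  -- open set where ‖b‖ is large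
  set U' : Set Y := {y | m - δ/2 < ‖b y‖} with hU'
  have hU'open : IsOpen U' := isOpen_lt continuous_const (by continuity)
  -- compact set where ‖b‖ not small, inside S
  set K : Set Y := S ∩ {y | m - δ ≤ ‖b y‖} with hK
  have hKcl : IsClosed K := hS.1.inter (isClosed_le continuous_const (by continuity))
  have hxK : x ∉ proj '' K := by
    rintro ⟨y, ⟨hyS, hy2⟩, hyx⟩
    have := H y hyS hyx
    simp only [Set.mem_setOf_eq] at hy2
    linarith
  set V : Set X := proj '' U' \ proj '' K with hV
  have hVopen : IsOpen V := (hopen U' hU'open).sdiff (hKcl.isCompact.image proj.continuous).isClosed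
  have hxV : x ∈ V := ⟨⟨ym, by simp only [hU', Set.mem_setOf_eq]; linarith, hym⟩, hxK⟩
  obtain ⟨a, haA, x₁, hx₁V, r, hr0, hM, hrM, hamax, hroff⟩ := peaking A hx hVopen hxV
  set M := ‖a x₁‖ with hMdef
  obtain ⟨y₁, hy₁U', hy₁x₁⟩ := hx₁V.1
  have hy₁b : m - δ/2 < ‖b y₁‖ := hy₁U'
  have hmδ : 0 < m - δ/2 := by linarith
  -- choose n
  have hrat0 : (0:ℝ) ≤ r / M := div_nonneg hr0 hM.le
  have hrat1 : r / M < 1 := (div_lt_one hM).mpr hrM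
  have htend := tendsto_pow_atTop_nhds_zero_of_lt_one hrat0 hrat1
  have hbnd : (0:ℝ) < (m - δ/2) / (‖b‖ + 1) :=
    div_pos hmδ (by positivity)
  obtain ⟨n, hn⟩ := (htend.eventually_lt_const hbnd).exists
  have hbn : ‖b‖ * r ^ n < (m - δ/2) * M ^ n := by
    have hMn : (0:ℝ) < M ^ n := pow_pos hM n
    have h1 : (r / M) ^ n = r ^ n / M ^ n := div_pow r M n
    rw [h1] at hn
    have h2 : r ^ n / M ^ n * (‖b‖ + 1) < (m - δ/2) / (‖b‖ + 1) * (‖b‖ + 1) := by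
      apply mul_lt_mul_of_pos_right hn (by positivity)
    rw [div_mul_cancel₀ _ (by positivity : (‖b‖:ℝ) + 1 ≠ 0)] at h2
    have h3 : r ^ n / M ^ n * (‖b‖ + 1) * M ^ n < (m - δ/2) * M ^ n :=
      mul_lt_mul_of_pos_right h2 hMn
    have h4 : r ^ n / M ^ n * (‖b‖ + 1) * M ^ n = r ^ n * (‖b‖ + 1) := by
      field_simp
    rw [h4] at h3
    nlinarith [pow_nonneg hr0 n, norm_nonneg b]
  -- the function h = b * (a ∘ proj)^n
  have hhB : b * (a.comp proj) ^ n ∈ B := mul_mem hb (pow_mem (hext a haA) n)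
  obtain ⟨yn, hynS, hyn⟩ := hS.2 _ hhB
  have happ : ∀ w : Y, ‖(b * (a.comp proj) ^ n) w‖ = ‖b w‖ * ‖a (proj w)‖ ^ n := by
    intro w
    simp [norm_mul, norm_pow]
  have hlow : (m - δ/2) * M ^ n < ‖(b * (a.comp proj) ^ n) y₁‖ := by
    rw [happ, hy₁x₁]
    exact mul_lt_mul_of_pos_right hy₁b (pow_pos hM n)
  have hle := hyn y₁
  rw [happ y₁, happ yn, hy₁x₁] at hle
  by_cases hcase : proj yn ∈ V
  · have hynK : yn ∉ K := fun hmem => hcase.2 ⟨yn, hmem, rfl⟩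
    have hbyn : ‖b yn‖ < m - δ := by
      by_contra h
      exact hynK ⟨hynS, le_of_not_gt h⟩
    have hup : ‖b yn‖ * ‖a (proj yn)‖ ^ n ≤ (m - δ) * M ^ n := by
      apply mul_le_mul hbyn.le (pow_le_pow_left₀ (norm_nonneg _) (hamax _) n)
        (pow_nonneg (norm_nonneg _) n) (by linarith)
    have hMn : (0:ℝ) < M ^ n := pow_pos hM n
    nlinarith [hy₁b]
  · have hup : ‖b yn‖ * ‖a (proj yn)‖ ^ n ≤ ‖b‖ * r ^ n := by
      apply mul_le_mul (b.norm_coe_le_norm yn)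
        (pow_le_pow_left₀ (norm_nonneg _) (hroff _ hcase) n)
        (pow_nonneg (norm_nonneg _) n) (norm_nonneg b)
    nlinarith [hy₁b, pow_pos hM n]

/-- For `x` in the Shilov boundary of `A`, every `b ∈ B` attains its maximum over the
fibre of `x` at a point of `S ∩ fibre`, for any closed boundary `S` of `B`. -/
lemma fibre_max {X Y : Type*}
    [TopologicalSpace X] [CompactSpace X] [T2Space X]
    [TopologicalSpace Y] [CompactSpace Y] [T2Space Y]
    (A : Subalgebra ℂ C(X, ℂ)) (B : Subalgebra ℂ C(Y, ℂ))
    (proj : C(Y, X)) (hsurj : Function.Surjective proj) (hopen : IsOpenMap proj)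
    (hext : ∀ g : C(X, ℂ), g ∈ A → g.comp proj ∈ B)
    {x : X} (hx : x ∈ shilovBoundary A)
    {S : Set Y} (hS : IsClosedBoundary B S)
    {b : C(Y, ℂ)} (hb : b ∈ B) :
    ∃ y ∈ S, proj y = x ∧ ∀ z, proj z = x → ‖b z‖ ≤ ‖b y‖ := by
  obtain ⟨y₀, hy₀⟩ := hsurj x
  -- S ∩ fibre is nonempty
  have hSF : ∃ y ∈ S, proj y = x := by
    obtain ⟨y, hyS, hyx, -⟩ := core A B proj hopen hext hx hS (one_mem B) hy₀
      (by norm_num : (0:ℝ) < 1/2) (by simp only [ContinuousMap.one_apply, norm_one]; norm_num)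
    exact ⟨y, hyS, hyx⟩
  -- max of ‖b‖ over S ∩ fibre
  have hSFcl : IsClosed (S ∩ proj ⁻¹' {x}) :=
    hS.1.inter (isClosed_singleton.preimage proj.continuous)
  obtain ⟨ystar, hystar, hystarmax⟩ := hSFcl.isCompact.exists_isMaxOn
    (by obtain ⟨y, h1, h2⟩ := hSF; exact ⟨y, h1, h2⟩)
    (Continuous.continuousOn (by continuity : Continuous fun w => ‖b w‖))
  refine ⟨ystar, hystar.1, hystar.2, ?_⟩
  -- max of ‖b‖ over the fibre
  obtain ⟨ym, hymF, hymmax⟩ :=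
    ((isClosed_singleton.preimage proj.continuous)).isCompact.exists_isMaxOn
    ⟨y₀, hy₀⟩ (Continuous.continuousOn (by continuity : Continuous fun w => ‖b w‖))
  intro z hz
  have hz' : ‖b z‖ ≤ ‖b ym‖ := hymmax hz
  -- so it suffices to prove ‖b ym‖ ≤ ‖b ystar‖
  have key : ‖b ym‖ ≤ ‖b ystar‖ := by
    by_contra h
    push_neg at h
    have hm0 : 0 < ‖b ym‖ := lt_of_le_of_lt (norm_nonneg _) h
    set δ : ℝ := min ((‖b ym‖ - ‖b ystar‖)/2) (‖b ym‖/2) with hδdef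
    have hδ0 : 0 < δ := lt_min (by linarith) (by linarith)
    have hδm : δ < ‖b ym‖ := lt_of_le_of_lt (min_le_right _ _) (by linarith)
    obtain ⟨y, hyS, hyx, hylow⟩ := core A B proj hopen hext hx hS hb hymF hδ0 hδm
    have : ‖b y‖ ≤ ‖b ystar‖ := hystarmax ⟨hyS, hyx⟩
    have hδle : δ ≤ (‖b ym‖ - ‖b ystar‖)/2 := min_le_left _ _
    linarith
  linarith

theorem shilov_boundary_of_fibre_algebra_subset {X Y : Type*}
    [TopologicalSpace X] [CompactSpace X] [T2Space X]
    [TopologicalSpace Y] [CompactSpace Y] [T2Space Y]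
    (A : Subalgebra ℂ C(X, ℂ)) (hA : IsUniformAlgebra A)
    (B : Subalgebra ℂ C(Y, ℂ)) (hB : IsUniformAlgebra B)
    (proj : C(Y, X)) (hsurj : Function.Surjective proj) (hopen : IsOpenMap proj)
    (hext : ∀ g : C(X, ℂ), g ∈ A → g.comp proj ∈ B) :
    ∀ x ∈ shilovBoundary A,
      Subtype.val '' shilovBoundary (fibreAlgebra B proj x) ⊆
        shilovBoundary B ∩ proj ⁻¹' {x} := by
  intro x hx
  rintro _ ⟨z, hz, rfl⟩
  haveI : CompactSpace (proj ⁻¹' {x} : Set Y) :=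
    isCompact_iff_compactSpace.mp (isClosed_singleton.preimage proj.continuous).isCompact
  refine ⟨?_, z.2⟩
  intro S hS
  have hS : IsClosedBoundary B S := hS
  -- it suffices that Subtype.val ⁻¹' S is a closed boundary for the fibre algebra
  suffices hT : IsClosedBoundary (fibreAlgebra B proj x) (Subtype.val ⁻¹' S) by
    exact hz _ hT
  constructor
  · exact hS.1.preimage continuous_subtype_val
  · intro f hf
    -- T is nonempty
    obtain ⟨y₁, hy₁S, hy₁x, -⟩ := fibre_max A B proj hsurj hopen hext hx hS (one_mem B)
    have hTne : (Subtype.val ⁻¹' S : Set (proj ⁻¹' {x} : Set Y)).Nonempty :=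
      ⟨⟨y₁, hy₁x⟩, hy₁S⟩
    have hTcl : IsClosed (Subtype.val ⁻¹' S : Set (proj ⁻¹' {x} : Set Y)) :=
      hS.1.preimage continuous_subtype_val
    obtain ⟨zstar, hzstar, hzstarmax⟩ := hTcl.isCompact.exists_isMaxOn hTne
      (Continuous.continuousOn (by continuity : Continuous fun w => ‖f w‖))
    refine ⟨zstar, hzstar, ?_⟩
    intro w
    refine le_of_forall_pos_le_add ?_
    intro ε hε
    -- approximate f by a restriction of an element of B
    have hf' : f ∈ closure ((B.map (ContinuousMap.compRightAlgHom ℂ ℂ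
        (⟨Subtype.val, continuous_subtype_val⟩ : C((proj ⁻¹' {x} : Set Y), Y)))) :
        Set C((proj ⁻¹' {x} : Set Y), ℂ)) := by
      have hf2 : f ∈ (B.map (ContinuousMap.compRightAlgHom ℂ ℂ
          (⟨Subtype.val, continuous_subtype_val⟩ :
            C((proj ⁻¹' {x} : Set Y), Y)))).topologicalClosure := hf
      rwa [← Subalgebra.topologicalClosure_coe, SetLike.mem_coe]
    rw [Metric.mem_closure_iff] at hf'
    obtain ⟨g, hg, hdist⟩ := hf' (ε/2) (by linarith)
    obtain ⟨b, hb, rfl⟩ := hg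
    obtain ⟨y, hyS, hyx, hymax⟩ := fibre_max A B proj hsurj hopen hext hx hS hb
    set yhat : (proj ⁻¹' {x} : Set Y) := ⟨y, hyx⟩ with hyhat
    have hyhatT : yhat ∈ (Subtype.val ⁻¹' S : Set (proj ⁻¹' {x} : Set Y)) := hyS
    have happ : ∀ v : (proj ⁻¹' {x} : Set Y),
        (ContinuousMap.compRightAlgHom ℂ ℂ
          (⟨Subtype.val, continuous_subtype_val⟩ :
            C((proj ⁻¹' {x} : Set Y), Y)) b) v = b v.val := fun v => rfl
    have h1 : ∀ v : (proj ⁻¹' {x} : Set Y), dist (f v) (b v.val) ≤ ε/2 := by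
      intro v
      calc dist (f v) (b v.val)
          = dist (f v) ((ContinuousMap.compRightAlgHom ℂ ℂ
            (⟨Subtype.val, continuous_subtype_val⟩ :
              C((proj ⁻¹' {x} : Set Y), Y)) b) v) := by rw [happ]
        _ ≤ _ := ContinuousMap.dist_apply_le_dist v
        _ ≤ ε/2 := hdist.le
    have h2 : ‖f w‖ ≤ ‖b w.val‖ + ε/2 := by
      have := h1 w
      rw [dist_eq_norm] at this
      have := norm_sub_norm_le (f w) (b w.val)
      linarith [h1 w, (dist_eq_norm (f w) (b w.val)) ▸ h1 w]
    have h3 : ‖b w.val‖ ≤ ‖b y‖ := hymax _ w.2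
    have h4 : ‖b y‖ ≤ ‖f yhat‖ + ε/2 := by
      have := h1 yhat
      rw [dist_eq_norm] at this
      have h5 := norm_sub_norm_le (b y) (f yhat)
      rw [← dist_eq_norm, dist_comm] at h5
      have : ‖b yhat.val‖ - ‖f yhat‖ ≤ dist (f yhat) (b yhat.val) := by
        rw [dist_comm, dist_eq_norm]
        exact norm_sub_norm_le _ _
      have h6 := h1 yhat
      simp only [hyhat] at this h6 ⊢
      linarith
    have h7 : ‖f yhat‖ ≤ ‖f zstar‖ := hzstarmax hyhatT
    linarith
end

section
/- Let B be a generalised Cole extension of a uniform algebra A with associated maps Π : Y → X and T : C(Y) → C(X), and for x ∈ X let μ_x be the measure representing f ↦ T(f)(x). Then the restriction T|B is an algebra homomorphism if and only if for every x ∈ X the measure μ_x is a representing measure for some character on B. -/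
/-- `B` is a generalised Cole extension of `A` with associated maps `proj` and `T`:
`proj` is a continuous surjection, `T` is a unital norm-one linear map with
`T ∘ proj* = id` and `T(B) = A`. -/
def IsGenColeExtension {X Y : Type*}
    [TopologicalSpace X] [CompactSpace X] [T2Space X]
    [TopologicalSpace Y] [CompactSpace Y] [T2Space Y]
    (A : Subalgebra ℂ C(X, ℂ)) (B : Subalgebra ℂ C(Y, ℂ))
    (proj : C(Y, X)) (T : C(Y, ℂ) →L[ℂ] C(X, ℂ)) : Prop :=
  Function.Surjective proj ∧ T 1 = 1 ∧ ‖T‖ = 1 ∧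
    (∀ g : C(X, ℂ), T (g.comp proj) = g) ∧
    (∀ f : C(Y, ℂ), f ∈ B → T f ∈ A) ∧
    (∀ g : C(X, ℂ), g ∈ A → ∃ f ∈ B, T f = g)

open MeasureTheory

theorem gen_cole_extension_T_homomorphism_iff {X Y : Type*}
    [TopologicalSpace X] [CompactSpace X] [T2Space X]
    [TopologicalSpace Y] [CompactSpace Y] [T2Space Y]
    [MeasurableSpace Y] [BorelSpace Y]
    (A : Subalgebra ℂ C(X, ℂ)) (hA : IsUniformAlgebra A)
    (B : Subalgebra ℂ C(Y, ℂ)) (hB : IsUniformAlgebra B)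
    (proj : C(Y, X)) (T : C(Y, ℂ) →L[ℂ] C(X, ℂ))
    (hGCE : IsGenColeExtension A B proj T)
    (μ : X → Measure Y) (hμprob : ∀ x : X, IsProbabilityMeasure (μ x))
    (hrep : ∀ (f : C(Y, ℂ)) (x : X), T f x = ∫ y, f y ∂(μ x)) :
    (∀ f ∈ B, ∀ g ∈ B, T (f * g) = T f * T g) ↔
      (∀ x : X, ∃ ψ : B →ₐ[ℂ] ℂ, ∀ f : B, ψ f = ∫ y, (f : C(Y, ℂ)) y ∂(μ x)) := by
  obtain ⟨hsurj, hT1, hTnorm, hTpi, hTB, hTA⟩ := hGCE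
  constructor
  · intro hmul x
    refine ⟨{ toFun := fun f => T (f : C(Y, ℂ)) x
              map_one' := by simp [hT1]
              map_mul' := fun f g => by
                have := hmul f f.2 g g.2
                simp only [Subalgebra.coe_mul]
                rw [this]; rfl
              map_zero' := by simp
              map_add' := fun f g => by simp
              commutes' := fun r => by
                have : ((algebraMap ℂ B r : B) : C(Y, ℂ)) = r • (1 : C(Y, ℂ)) := by
                  ext y; simp [Algebra.algebraMap_eq_smul_one]
                simp [this, hT1] }, fun f => ?_⟩
    exact hrep (f : C(Y, ℂ)) x
  · intro h f hf g hg
    ext x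
    obtain ⟨ψ, hψ⟩ := h x
    have hfg : T (f * g) x = ψ (⟨f, hf⟩ * ⟨g, hg⟩) := by
      rw [hψ]; exact hrep (f * g) x
    rw [ContinuousMap.mul_apply, hfg, map_mul, hψ, hψ, hrep f x, hrep g x]
end

section
/- Let B be a generalised Cole extension of a uniform algebra A with associated maps Π : Y → X and T : C(Y) → C(X). If B is normal on Y then A is normal on X. -/
/-- `A` is normal on `Z`: disjoint closed sets can be separated by a function of `A`
which is 1 on one and 0 on the other. -/
def IsNormalAlgebra {Z : Type*} [TopologicalSpace Z]
    (A : Subalgebra ℂ C(Z, ℂ)) : Prop :=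
  ∀ K E : Set Z, IsClosed K → IsClosed E → K ∩ E = ∅ →
    ∃ f ∈ A, (∀ z ∈ K, f z = 1) ∧ ∀ z ∈ E, f z = 0

/-!
For `x : X`, `f ↦ T f x` is a functional of norm at most one that takes the value `g x` on
`g ∘ proj`. Such a functional, if it equals `1` on some `u` with `‖u‖ ≤ 1`, kills every function
whose support is disjoint from that of `u`. Taking `u = g ∘ proj` for an Urysohn function `g`
peaking at `x` shows that `T f x` only depends on `f` over a neighbourhood of the fibre over `x`.
Hence if `f ∈ B` is `1` over a closed neighbourhood of `K` and `0` over one of `E`, then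
`T f ∈ A` is `1` on `K` and `0` on `E`.
-/

open Set Filter Topology

namespace ContinuousMap

variable {Y : Type*} [TopologicalSpace Y] [CompactSpace Y]

theorem norm_add_le_max_of_disjoint_support {E : Type*} [NormedAddCommGroup E] {f g : C(Y, E)}
    (hfg : Disjoint (Function.support f) (Function.support g)) :
    ‖f + g‖ ≤ max ‖f‖ ‖g‖ := by
  refine (norm_le _ (le_max_of_le_left (norm_nonneg f))).2 fun y => ?_
  rw [add_apply]
  by_cases hy : f y = 0
  · rw [hy, zero_add]
    exact le_max_of_le_right (g.norm_coe_le_norm y)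
  · rw [Function.notMem_support.1 (disjoint_left.1 hfg hy), add_zero]
    exact le_max_of_le_left (f.norm_coe_le_norm y)

/-- Adding to `q` the multiple `s • u` with `‖s‖ = ‖q‖` and `s` pointing along `φ q` does not
increase the norm, but adds `‖q‖` to `‖φ q‖`. -/
theorem map_eq_zero_of_disjoint_support {𝕜 : Type*} [RCLike 𝕜] (φ : C(Y, 𝕜) →L[𝕜] 𝕜)
    (hφ : ‖φ‖ ≤ 1) {u q : C(Y, 𝕜)} (hu : ‖u‖ ≤ 1) (hφu : φ u = 1)
    (hqu : Disjoint (Function.support q) (Function.support u)) : φ q = 0 := by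
  by_contra ha
  set a := φ q
  have ha₀ : 0 < ‖a‖ := norm_pos_iff.2 ha
  set s : 𝕜 := ((‖q‖ / ‖a‖ : ℝ) : 𝕜) * a
  have hs : ‖s‖ = ‖q‖ := by
    rw [norm_mul, RCLike.norm_ofReal, abs_of_nonneg (by positivity), div_mul_cancel₀ _ ha₀.ne']
  have hsu : ‖s • u‖ ≤ ‖q‖ :=
    (norm_smul_le s u).trans (by rw [hs]; exact mul_le_of_le_one_right (norm_nonneg q) hu)
  have hsupport : Function.support (s • u) ⊆ Function.support u := by
    rw [coe_smul]
    exact Function.support_const_smul_subset s u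
  have hpush : ‖q + s • u‖ ≤ ‖q‖ :=
    (norm_add_le_max_of_disjoint_support (hqu.mono_right hsupport)).trans (max_le le_rfl hsu)
  have hφpush : φ (q + s • u) = ((1 + ‖q‖ / ‖a‖ : ℝ) : 𝕜) * a := by
    rw [map_add, map_smul, hφu, smul_eq_mul, mul_one]
    simp only [s, a]
    push_cast
    ring
  have : ‖a‖ + ‖q‖ ≤ ‖q‖ :=
    calc ‖a‖ + ‖q‖ = ‖φ (q + s • u)‖ := by
          rw [hφpush, norm_mul, RCLike.norm_ofReal, abs_of_nonneg (by positivity), add_mul,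
            one_mul, div_mul_cancel₀ _ ha₀.ne']
      _ ≤ ‖φ‖ * ‖q + s • u‖ := φ.le_opNorm _
      _ ≤ ‖q‖ := by nlinarith [norm_nonneg φ, norm_nonneg (q + s • u)]
  linarith

variable {𝕜 X : Type*} [RCLike 𝕜] [TopologicalSpace X] [CompactSpace X] [T2Space X]

theorem apply_eq_of_eqOn_preimage_of_mem_nhds (proj : C(Y, X)) (T : C(Y, 𝕜) →L[𝕜] C(X, 𝕜))
    (hT : ‖T‖ ≤ 1) (hTproj : ∀ g : C(X, 𝕜), T (g.comp proj) = g) {x : X} {U : Set X}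
    (hU : U ∈ 𝓝 x) {f : C(Y, 𝕜)} {c : 𝕜} (hf : EqOn f (fun _ => c) (proj ⁻¹' U)) :
    T f x = c := by
  obtain ⟨V, hVU, hVo, hxV⟩ := mem_nhds_iff.1 hU
  obtain ⟨g, hg0, hg1, hg01⟩ := exists_continuous_zero_one_of_isClosed hVo.isClosed_compl
    isClosed_singleton (disjoint_singleton_right.2 (not_not.2 hxV))
  set g𝕜 : C(X, 𝕜) := (⟨(↑), RCLike.continuous_ofReal⟩ : C(ℝ, 𝕜)).comp g
  have hu : ‖g𝕜.comp proj‖ ≤ 1 := (norm_le _ zero_le_one).2 fun y => by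
    simpa [g𝕜, abs_le] using ⟨(hg01 (proj y)).1.trans' (by norm_num), (hg01 (proj y)).2⟩
  have hφ : ‖(evalCLM 𝕜 x).comp T‖ ≤ 1 :=
    ContinuousLinearMap.opNorm_le_bound _ zero_le_one fun f =>
      ((T f).norm_coe_le_norm x).trans (T.le_of_opNorm_le hT f)
  have hφu : (evalCLM 𝕜 x).comp T (g𝕜.comp proj) = 1 := by
    rw [ContinuousLinearMap.comp_apply, hTproj, evalCLM_apply]
    simpa [g𝕜] using hg1 rfl
  have hdisj : Disjoint (Function.support (f - const Y c)) (Function.support (g𝕜.comp proj)) := by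
    refine disjoint_left.2 fun y hfy huy => hfy ?_
    have : proj y ∈ V := by_contra fun hyV => huy (by simp [g𝕜, hg0 hyV])
    simp [hf (hVU this)]
  have h := map_eq_zero_of_disjoint_support _ hφ hu hφu hdisj
  rw [ContinuousLinearMap.comp_apply, map_sub, ← const_comp c proj, hTproj] at h
  simpa [sub_eq_zero] using h

end ContinuousMap

theorem normal_descends_along_gen_cole_extension_general {X Y : Type*}
    [TopologicalSpace X] [CompactSpace X] [T2Space X]
    [TopologicalSpace Y] [CompactSpace Y] [T2Space Y]
    (A : Subalgebra ℂ C(X, ℂ))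
    (B : Subalgebra ℂ C(Y, ℂ))
    (proj : C(Y, X)) (T : C(Y, ℂ) →L[ℂ] C(X, ℂ))
    (hGCE : IsGenColeExtension A B proj T)
    (hBnormal : IsNormalAlgebra B) :
    IsNormalAlgebra A := by
  obtain ⟨-, -, hTn, hTproj, hTB, -⟩ := hGCE
  intro K E hK hE hKE
  obtain ⟨U, hUo, hKU, hUE⟩ := normal_exists_closure_subset hK hE.isOpen_compl
    (subset_compl_iff_disjoint_right.2 (disjoint_iff_inter_eq_empty.2 hKE))
  obtain ⟨V, hVo, hEV, hVU⟩ :=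
    normal_exists_closure_subset hE isClosed_closure.isOpen_compl (subset_compl_comm.1 hUE)
  obtain ⟨f, hfB, hf1, hf0⟩ := hBnormal (proj ⁻¹' closure U) (proj ⁻¹' closure V)
    (isClosed_closure.preimage proj.continuous) (isClosed_closure.preimage proj.continuous)
    (by rw [← preimage_inter, (disjoint_compl_right.mono_right hVU).inter_eq, preimage_empty])
  refine ⟨T f, hTB f hfB, fun x hx => ?_, fun x hx => ?_⟩
  · exact ContinuousMap.apply_eq_of_eqOn_preimage_of_mem_nhds proj T hTn.le hTproj
      (hUo.mem_nhds (hKU hx)) fun y hy => hf1 y (subset_closure hy)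
  · exact ContinuousMap.apply_eq_of_eqOn_preimage_of_mem_nhds proj T hTn.le hTproj
      (hVo.mem_nhds (hEV hx)) fun y hy => hf0 y (subset_closure hy)

theorem normal_descends_along_gen_cole_extension {X Y : Type*}
    [TopologicalSpace X] [CompactSpace X] [T2Space X]
    [TopologicalSpace Y] [CompactSpace Y] [T2Space Y]
    (A : Subalgebra ℂ C(X, ℂ)) (hA : IsUniformAlgebra A)
    (B : Subalgebra ℂ C(Y, ℂ)) (hB : IsUniformAlgebra B)
    (proj : C(Y, X)) (T : C(Y, ℂ) →L[ℂ] C(X, ℂ))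
    (hGCE : IsGenColeExtension A B proj T)
    (hBnormal : IsNormalAlgebra B) :
    IsNormalAlgebra A :=
  normal_descends_along_gen_cole_extension_general A B proj T hGCE hBnormal
end

section
/- Let X, Y be compact Hausdorff spaces, Π : Y → X a continuous surjection, G a compact topological group with normalised Haar measure μ, acting continuously on Y such that every fibre Π⁻¹({x}) is precisely a G-orbit. Define P(f)(y) = ∫_G f(s·y) dμ(s) for f ∈ C(Y). Then P is a well-defined continuous unital linear projection on C(Y) with ‖P‖ = 1, whose range is exactly Π*(C(X)), and P ∘ Π* = Π*. -/
/-! Averaging over `G` yields functions constant on orbits. The normalised Haar measure of a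
compact group is also right invariant, since its right translates are again Haar probability
measures; hence averaging fixes every orbit-invariant function, so `P` is an idempotent whose
range is the space of orbit-invariant functions. As the fibres of the quotient map `Π` are the
orbits, these are exactly the functions `g ∘ Π` with `g ∈ C(X)`. Finally `‖P‖ ≤ 1` because `μ`
is a probability measure, and `P 1 = 1` gives equality. -/

open MeasureTheory

theorem MeasureTheory.Measure.isMulRightInvariant_of_isProbabilityMeasure
    {G : Type*} [Group G] [TopologicalSpace G] [IsTopologicalGroup G] [LocallyCompactSpace G]
    [MeasurableSpace G] [BorelSpace G] (μ : Measure G) [μ.IsHaarMeasure] [IsProbabilityMeasure μ] :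
    μ.IsMulRightInvariant where
  map_mul_right_eq_self g :=
    have : IsProbabilityMeasure (μ.map (· * g)) :=
      isProbabilityMeasure_map (measurable_mul_const g).aemeasurable
    Measure.isHaarMeasure_eq_of_isProbabilityMeasure _ μ

namespace ContinuousMap

section Integral

variable {G E : Type*} [TopologicalSpace G] [CompactSpace G] [MeasurableSpace G]
  [NormedAddCommGroup E] (μ : Measure G) [IsFiniteMeasure μ]

theorem integrable [OpensMeasurableSpace G] (f : C(G, E)) : Integrable f μ :=
  f.continuous.integrable_of_hasCompactSupport (.of_compactSpace _)

variable [NormedSpace ℝ E]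

theorem norm_integral_le (f : C(G, E)) : ‖∫ s, f s ∂μ‖ ≤ μ.real Set.univ * ‖f‖ :=
  (norm_integral_le_of_norm_le_const (ae_of_all _ f.norm_coe_le_norm)).trans_eq (mul_comm _ _)

theorem continuous_integral [OpensMeasurableSpace G] :
    Continuous fun f : C(G, E) => ∫ s, f s ∂μ :=
  AddMonoidHomClass.continuous_of_bound
    ({ toFun := fun f => ∫ s, f s ∂μ
       map_zero' := integral_zero _ _
       map_add' := fun f g => integral_add (f.integrable μ) (g.integrable μ) } : C(G, E) →+ E)
    _ (norm_integral_le μ)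

end Integral

section OrbitAverage

variable {G Y E : Type*} [Group G] [TopologicalSpace G] [CompactSpace G] [MeasurableSpace G]
  [OpensMeasurableSpace G] [TopologicalSpace Y] [MulAction G Y] [ContinuousSMul G Y]
  [NormedAddCommGroup E] (μ : Measure G) [IsFiniteMeasure μ]

theorem integrable_comp_smul (f : C(Y, E)) (y : Y) : Integrable (fun s : G => f (s • y)) μ :=
  (f.comp ⟨(· • y), by fun_prop⟩).integrable μ

variable [NormedSpace ℝ E]

theorem continuous_integral_comp_smul (f : C(Y, E)) : Continuous fun y => ∫ s, f (s • y) ∂μ :=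
  (continuous_integral μ).comp (f.comp ⟨fun p : Y × G => p.2 • p.1, by fun_prop⟩).curry.continuous

variable (𝕜 : Type*) [NontriviallyNormedField 𝕜] [NormedSpace 𝕜 E] [SMulCommClass ℝ 𝕜 E]
  [CompactSpace Y]

noncomputable def orbitAverage : C(Y, E) →L[𝕜] C(Y, E) :=
  LinearMap.mkContinuous
    { toFun := fun f => ⟨fun y => ∫ s, f (s • y) ∂μ, f.continuous_integral_comp_smul μ⟩
      map_add' := fun f g => ext fun y =>
        integral_add (f.integrable_comp_smul μ y) (g.integrable_comp_smul μ y)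
      map_smul' := fun c f => ext fun y => integral_smul c _ }
    (μ.real Set.univ) fun f => (norm_le _ (by positivity)).2 fun y =>
      (norm_integral_le_of_norm_le_const (ae_of_all _ fun s => f.norm_coe_le_norm (s • y))).trans_eq
        (mul_comm _ _)

variable {μ 𝕜}

@[simp]
theorem orbitAverage_apply (f : C(Y, E)) (y : Y) : orbitAverage μ 𝕜 f y = ∫ s, f (s • y) ∂μ :=
  rfl

theorem norm_orbitAverage_le : ‖(orbitAverage μ 𝕜 : C(Y, E) →L[𝕜] C(Y, E))‖ ≤ μ.real Set.univ :=
  LinearMap.mkContinuous_norm_le _ (by positivity) _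

theorem orbitAverage_eq_self [CompleteSpace E] [IsProbabilityMeasure μ] {f : C(Y, E)}
    (hf : ∀ (s : G) (y : Y), f (s • y) = f y) : orbitAverage μ 𝕜 f = f :=
  ext fun y => by simp [hf]

theorem orbitAverage_apply_smul [MeasurableMul G] [μ.IsMulRightInvariant] (f : C(Y, E)) (t : G)
    (y : Y) : orbitAverage μ 𝕜 f (t • y) = orbitAverage μ 𝕜 f y := by
  simp only [orbitAverage_apply, smul_smul]
  exact integral_mul_right_eq_self (fun s => f (s • y)) t

variable [CompleteSpace E] [IsProbabilityMeasure μ] [MeasurableMul G] [μ.IsMulRightInvariant]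

theorem orbitAverage_orbitAverage (f : C(Y, E)) :
    orbitAverage μ 𝕜 (orbitAverage μ 𝕜 f) = orbitAverage μ 𝕜 f :=
  orbitAverage_eq_self (orbitAverage_apply_smul f)

theorem range_orbitAverage :
    Set.range (orbitAverage μ 𝕜) = {f : C(Y, E) | ∀ (s : G) (y : Y), f (s • y) = f y} :=
  Set.Subset.antisymm (Set.range_subset_iff.2 orbitAverage_apply_smul) fun f hf =>
    ⟨f, orbitAverage_eq_self hf⟩

end OrbitAverage

theorem forall_apply_smul_eq_iff_exists_eq_comp {G Y X Z : Type*} [Group G]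
    [TopologicalSpace Y] [TopologicalSpace X] [TopologicalSpace Z] [MulAction G Y]
    {proj : C(Y, X)} (hproj : Topology.IsQuotientMap proj)
    (horbit : ∀ y : Y, MulAction.orbit G y = proj ⁻¹' {proj y}) {f : C(Y, Z)} :
    (∀ (s : G) (y : Y), f (s • y) = f y) ↔ ∃ g : C(X, Z), f = g.comp proj := by
  constructor
  · intro hf
    have hfactor : Function.FactorsThrough f proj := fun y y' h => by
      obtain ⟨s, rfl⟩ : y' ∈ MulAction.orbit G y := by simp [horbit y, h]
      exact (hf s y).symm
    exact ⟨hproj.lift f hfactor, (hproj.lift_comp f hfactor).symm⟩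
  · rintro ⟨g, rfl⟩ s y
    have : s • y ∈ proj ⁻¹' {proj y} := horbit y ▸ MulAction.mem_orbit y s
    simp_all

end ContinuousMap

open ContinuousMap

theorem haar_averaging_projection_general {X Y G : Type*}
    [TopologicalSpace X] [T2Space X]
    [TopologicalSpace Y] [CompactSpace Y] [Nonempty Y]
    [Group G] [TopologicalSpace G] [IsTopologicalGroup G] [CompactSpace G]
    [MeasurableSpace G] [BorelSpace G]
    (μ : Measure G) [μ.IsHaarMeasure] [IsProbabilityMeasure μ]
    [MulAction G Y] [ContinuousSMul G Y]
    (proj : C(Y, X)) (hsurj : Function.Surjective proj)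
    (horbit : ∀ y : Y, MulAction.orbit G y = proj ⁻¹' {proj y}) :
    ∃ P : C(Y, ℂ) →L[ℂ] C(Y, ℂ),
      (∀ (f : C(Y, ℂ)) (y : Y), P f y = ∫ s, f (s • y) ∂μ) ∧
      P 1 = 1 ∧ ‖P‖ = 1 ∧
      (∀ f : C(Y, ℂ), P (P f) = P f) ∧
      (∀ g : C(X, ℂ), P (g.comp proj) = g.comp proj) ∧
      Set.range P = {f : C(Y, ℂ) | ∃ g : C(X, ℂ), f = g.comp proj} := by
  have : μ.IsMulRightInvariant := μ.isMulRightInvariant_of_isProbabilityMeasure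
  have hproj : Topology.IsQuotientMap proj :=
    proj.continuous.isClosedMap.isQuotientMap proj.continuous hsurj
  have hinvariant (f : C(Y, ℂ)) := forall_apply_smul_eq_iff_exists_eq_comp hproj horbit (f := f)
  have hone : orbitAverage μ ℂ (1 : C(Y, ℂ)) = 1 := orbitAverage_eq_self fun _ _ => rfl
  refine ⟨orbitAverage μ ℂ, orbitAverage_apply, hone, ?_, orbitAverage_orbitAverage,
    fun g => orbitAverage_eq_self ((hinvariant _).2 ⟨g, rfl⟩), ?_⟩
  · refine le_antisymm (norm_orbitAverage_le.trans_eq probReal_univ) ?_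
    simpa [hone] using (orbitAverage μ ℂ).le_opNorm (1 : C(Y, ℂ))
  · rw [range_orbitAverage]
    exact Set.ext hinvariant

theorem haar_averaging_projection {X Y G : Type*}
    [TopologicalSpace X] [CompactSpace X] [T2Space X]
    [TopologicalSpace Y] [CompactSpace Y] [T2Space Y] [Nonempty Y]
    [Group G] [TopologicalSpace G] [IsTopologicalGroup G] [CompactSpace G] [T2Space G]
    [MeasurableSpace G] [BorelSpace G]
    (μ : Measure G) [μ.IsHaarMeasure] [IsProbabilityMeasure μ]
    [MulAction G Y] [ContinuousSMul G Y]
    (proj : C(Y, X)) (hsurj : Function.Surjective proj)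
    (horbit : ∀ y : Y, MulAction.orbit G y = proj ⁻¹' {proj y}) :
    ∃ P : C(Y, ℂ) →L[ℂ] C(Y, ℂ),
      (∀ (f : C(Y, ℂ)) (y : Y), P f y = ∫ s, f (s • y) ∂μ) ∧
      P 1 = 1 ∧ ‖P‖ = 1 ∧
      (∀ f : C(Y, ℂ), P (P f) = P f) ∧
      (∀ g : C(X, ℂ), P (g.comp proj) = g.comp proj) ∧
      Set.range P = {f : C(Y, ℂ) | ∃ g : C(X, ℂ), f = g.comp proj} :=
  haar_averaging_projection_general μ proj hsurj horbit
end

section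
/- Let X, Y be compact Hausdorff spaces and Π : Y → X a continuous surjection, and let G be a compact group acting continuously on Y such that each fibre of Π is a G-orbit (G·y = Π⁻¹({Π(y)}) for all y ∈ Y). Then Π is an open map. -/
/-! Since `Y` is compact and `X` Hausdorff, `Π` is a closed continuous surjection, hence a quotient
map. When the fibres are orbits, `Π⁻¹(Π U) = G • U` is a union of translates of `U`, so it is open
for open `U`, and therefore `Π U` is open. -/

open Pointwise Topology

theorem preimage_image_eq_univ_smul_of_orbit_eq_fibre {G Y X : Type*} [Group G] [MulAction G Y]
    {f : Y → X} (horbit : ∀ y, MulAction.orbit G y = f ⁻¹' {f y}) (U : Set Y) :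
    f ⁻¹' (f '' U) = (Set.univ : Set G) • U := by
  ext y
  simp only [Set.mem_preimage, Set.mem_image, Set.mem_smul, Set.mem_univ, true_and]
  constructor
  · rintro ⟨u, hu, hfu⟩
    obtain ⟨g, rfl⟩ : y ∈ MulAction.orbit G u := by rw [horbit u]; exact hfu.symm
    exact ⟨g, u, hu, rfl⟩
  · rintro ⟨g, u, hu, rfl⟩
    have hgu : g • u ∈ f ⁻¹' {f u} := horbit u ▸ MulAction.mem_orbit u g
    exact ⟨u, hu, (hgu : f (g • u) = f u).symm⟩

theorem Topology.IsQuotientMap.isOpenMap_of_orbit_eq_fibre {G Y X : Type*} [Group G]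
    [MulAction G Y] [TopologicalSpace G] [TopologicalSpace Y] [TopologicalSpace X]
    [ContinuousConstSMul G Y] {f : Y → X} (hf : IsQuotientMap f)
    (horbit : ∀ y, MulAction.orbit G y = f ⁻¹' {f y}) : IsOpenMap f := by
  intro U hU
  rw [← hf.isOpen_preimage, preimage_image_eq_univ_smul_of_orbit_eq_fibre horbit]
  exact hU.smul_left

theorem open_map_of_fibres_are_orbits_general {X Y G : Type*}
    [TopologicalSpace X] [T2Space X]
    [TopologicalSpace Y] [CompactSpace Y]
    [Group G] [TopologicalSpace G]
    [MulAction G Y] [ContinuousSMul G Y]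
    (proj : C(Y, X)) (hsurj : Function.Surjective proj)
    (horbit : ∀ y : Y, MulAction.orbit G y = proj ⁻¹' {proj y}) :
    IsOpenMap proj :=
  (proj.continuous.isClosedMap.isQuotientMap proj.continuous hsurj).isOpenMap_of_orbit_eq_fibre
    horbit

theorem open_map_of_fibres_are_orbits {X Y G : Type*}
    [TopologicalSpace X] [CompactSpace X] [T2Space X]
    [TopologicalSpace Y] [CompactSpace Y] [T2Space Y]
    [Group G] [TopologicalSpace G] [IsTopologicalGroup G] [CompactSpace G] [T2Space G]
    [MulAction G Y] [ContinuousSMul G Y]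
    (proj : C(Y, X)) (hsurj : Function.Surjective proj)
    (horbit : ∀ y : Y, MulAction.orbit G y = proj ⁻¹' {proj y}) :
    IsOpenMap proj :=
  open_map_of_fibres_are_orbits_general proj hsurj horbit
end

section
/- Let A and B be uniform algebras on compact Hausdorff spaces X and Y, Π : Y → X a continuous surjection, and T : C(Y) → C(X) a unital norm-one linear map with T ∘ Π* = id and T(B) = A. Suppose moreover that ‖id_{C(Y)} − Π* ∘ T‖ = 1. Then θ := 2(Π* ∘ T) − id_{C(Y)} is an isometric algebra automorphism of C(Y) with θ ∘ θ = id, and hence there is a homeomorphism ρ : Y → Y of order at most 2 such that (Π* ∘ T)(f) = (f + f ∘ ρ)/2 for all f ∈ C(Y), and the two-element group {id_Y, ρ} acts on Y with orbits equal to the fibres of Π. -/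
/-!
`P` is a unital contraction, hence positive, and `‖id - P‖ ≤ 1` upgrades this to positivity of
`θ = 2P - id`: where `v ≥ 0` attains its maximum, `Pv ≥ v / 2`, and truncating an arbitrary
`v ≥ 0` at height `v y` reduces to that case. A positive involution is an order automorphism of
`C(Y)`, so it preserves absolute values; since `0 ≤ v² ≤ ‖v‖ |v|`, it then preserves squares of
real functions, and by polarisation all products. Thus every `f ↦ θ f y` is a character, i.e.
evaluation at a point `ρ y`. As `P` fixes the functions pulled back from `X`, `ρ` preserves the
fibres of `proj`; conversely `P f` is constant on a fibre, so `f z + f (ρ z) = f y + f (ρ y)` for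
all `f` whenever `proj z = proj y`, and Urysohn's lemma forces `z ∈ {y, ρ y}`.
-/

open scoped ComplexOrder
open ContinuousMap Complex

local notation "ι" => realToRCLikeStarAlgHom _ ℂ

section RealToComplex

variable {Y : Type*} [TopologicalSpace Y]

@[simp] theorem realToRCLikeStarAlgHom_apply_apply (u : C(Y, ℝ)) (z : Y) : ι u z = (u z : ℂ) :=
  rfl

theorem realToRCLikeStarAlgHom_const (c : ℝ) : ι (ContinuousMap.const Y c) = (c : ℂ) • 1 := by
  ext
  simp

theorem realToRCLikeStarAlgHom_le_iff {u w : C(Y, ℝ)} : ι u ≤ ι w ↔ u ≤ w :=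
  realToRCLike_le_realToRCLike_iff ℂ

theorem realToRCLikeStarAlgHom_nonneg_iff {u : C(Y, ℝ)} : 0 ≤ ι u ↔ 0 ≤ u := by
  rw [← map_zero (realToRCLikeStarAlgHom Y ℂ), realToRCLikeStarAlgHom_le_iff]

theorem exists_eq_realToRCLike_add_I_smul (f : C(Y, ℂ)) : ∃ u v : C(Y, ℝ), f = ι u + I • ι v :=
  ⟨rclikeToReal f, rclikeToReal (-I • f), by ext z; simp [mul_comm I]⟩

theorem isLUB_pair_realToRCLike_abs (u : C(Y, ℝ)) : IsLUB {ι u, -ι u} (ι |u|) := by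
  refine ⟨?_, fun g hg => ?_⟩
  · rintro _ (rfl | rfl)
    · exact realToRCLikeStarAlgHom_le_iff.2 (le_abs_self u)
    · exact (map_neg (realToRCLikeStarAlgHom Y ℂ) u) ▸
        realToRCLikeStarAlgHom_le_iff.2 (neg_le_abs u)
  · have hu : ι u ≤ g := hg (by simp)
    have hnu : -ι u ≤ g := hg (by simp)
    have hg : IsSelfAdjoint g := by
      simpa using (IsSelfAdjoint.of_nonneg (sub_nonneg.2 hu)).add
        (isSelfAdjoint_realToRCLike ℂ (f := u))
    obtain ⟨w, rfl⟩ : ∃ w, ι w = g := ⟨_, hg.realToRCLike_rclikeToReal⟩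
    rw [← map_neg] at hnu
    exact realToRCLikeStarAlgHom_le_iff.2
      (abs_le'.2 ⟨realToRCLikeStarAlgHom_le_iff.1 hu, realToRCLikeStarAlgHom_le_iff.1 hnu⟩)

theorem map_mul_of_map_realToRCLike_mul_self (ψ : C(Y, ℂ) →ₗ[ℂ] ℂ)
    (hψ : ∀ u, ψ (ι (u * u)) = ψ (ι u) * ψ (ι u)) (f g : C(Y, ℂ)) :
    ψ (f * g) = ψ f * ψ g := by
  have hreal (u v : C(Y, ℝ)) : ψ (ι (u * v)) = ψ (ι u) * ψ (ι v) := by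
    have h := hψ (u + v)
    simp only [add_mul, mul_add, map_add, hψ] at h
    rw [mul_comm v u] at h
    linear_combination h / 2
  obtain ⟨u₁, v₁, rfl⟩ := exists_eq_realToRCLike_add_I_smul f
  obtain ⟨u₂, v₂, rfl⟩ := exists_eq_realToRCLike_add_I_smul g
  have hexp : (ι u₁ + I • ι v₁) * (ι u₂ + I • ι v₂) =
      ι (u₁ * u₂) - ι (v₁ * v₂) + I • (ι (u₁ * v₂) + ι (v₁ * u₂)) := by
    ext z
    simp only [ContinuousMap.mul_apply, ContinuousMap.add_apply, ContinuousMap.sub_apply,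
      ContinuousMap.smul_apply, smul_eq_mul, realToRCLikeStarAlgHom_apply_apply, ofReal_mul]
    linear_combination (v₁ z * v₂ z : ℂ) * I_sq
  simp only [hexp, map_add, map_sub, map_smul, hreal, smul_eq_mul]
  linear_combination -(ψ (ι v₁) * ψ (ι v₂)) * I_sq

end RealToComplex

section UnitalContraction

variable {Y : Type*} [TopologicalSpace Y] [CompactSpace Y]

theorem norm_comp_homeomorph (f : C(Y, ℂ)) (ρ : Y ≃ₜ Y) : ‖f.comp (ρ : C(Y, Y))‖ = ‖f‖ := by
  refine le_antisymm ((norm_le _ (norm_nonneg f)).2 fun y => f.norm_coe_le_norm (ρ y))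
    ((norm_le _ (norm_nonneg _)).2 fun y => ?_)
  simpa using (f.comp ρ).norm_coe_le_norm (ρ.symm y)

theorem norm_realToRCLike_sub_half_smul_one_le {u : C(Y, ℝ)} {c : ℝ} (hc : 0 ≤ c)
    (hu₀ : 0 ≤ u) (huc : ∀ z, u z ≤ c) : ‖ι u - ((c / 2 : ℝ) : ℂ) • 1‖ ≤ c / 2 := by
  refine (ContinuousMap.norm_le _ (by positivity)).2 fun z => ?_
  have h₀ : 0 ≤ u z := hu₀ z
  have hz : (ι u - ((c / 2 : ℝ) : ℂ) • 1) z = ((u z - c / 2 : ℝ) : ℂ) := by simp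
  rw [hz, norm_real, Real.norm_eq_abs, abs_sub_le_iff]
  constructor <;> linarith [huc z]

variable {φ : C(Y, ℂ) →L[ℂ] ℂ}

theorem im_map_realToRCLike_eq_zero (h₁ : φ 1 = 1) (hφ : ∀ f, ‖φ f‖ ≤ ‖f‖) (u : C(Y, ℝ)) :
    (φ (ι u)).im = 0 := by
  set α := (φ (ι u)).re
  set β := (φ (ι u)).im
  -- `‖u + t i‖² ≤ ‖u‖² + t²`, while `|φ u + t i|²` grows like `t² + 2 β t`.
  have key (t : ℝ) : α ^ 2 + (β + t) ^ 2 ≤ ‖u‖ ^ 2 + t ^ 2 := by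
    have hnorm : ‖ι u + ((t : ℂ) * I) • 1‖ ≤ √(‖u‖ ^ 2 + t ^ 2) := by
      refine (ContinuousMap.norm_le _ (by positivity)).2 fun z => Real.le_sqrt_of_sq_le ?_
      have hz : (ι u + ((t : ℂ) * I) • 1) z = u z + t * I := by simp
      rw [hz, Complex.sq_norm, normSq_add_mul_I]
      have hu : u z ^ 2 ≤ ‖u‖ ^ 2 := by
        rw [← sq_abs]
        exact pow_le_pow_left₀ (abs_nonneg _) (u.norm_coe_le_norm z) 2
      linarith
    have hφt : φ (ι u + ((t : ℂ) * I) • 1) = α + ((β + t : ℝ) : ℂ) * I := by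
      rw [map_add, map_smul, h₁, smul_eq_mul, mul_one]
      apply Complex.ext <;> simp [α, β]
    rw [← normSq_add_mul_I, ← hφt, ← Complex.sq_norm,
      ← Real.sq_sqrt (by positivity : 0 ≤ ‖u‖ ^ 2 + t ^ 2)]
    exact pow_le_pow_left₀ (norm_nonneg _) ((hφ _).trans hnorm) 2
  by_contra hβ
  have hk := key ((‖u‖ ^ 2 + 1) / (2 * β))
  have ht : 2 * β * ((‖u‖ ^ 2 + 1) / (2 * β)) = ‖u‖ ^ 2 + 1 := by field_simp
  nlinarith [sq_nonneg α, sq_nonneg β]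

theorem map_realToRCLike_nonneg (h₁ : φ 1 = 1) (hφ : ∀ f, ‖φ f‖ ≤ ‖f‖) {u : C(Y, ℝ)}
    (hu : 0 ≤ u) : 0 ≤ φ (ι u) := by
  have hbound := (hφ _).trans <| norm_realToRCLike_sub_half_smul_one_le (norm_nonneg u) hu
    fun z => (le_abs_self _).trans (u.norm_coe_le_norm z)
  have hre := (abs_re_le_norm _).trans hbound
  simp only [map_sub, map_smul, h₁, smul_eq_mul, mul_one, sub_re, ofReal_re] at hre
  rw [nonneg_iff]
  exact ⟨by linarith [(abs_le.1 hre).1], (im_map_realToRCLike_eq_zero h₁ hφ u).symm⟩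

end UnitalContraction

section Reflection

variable {E : Type*} [NormedAddCommGroup E] [NormedSpace ℂ E]

noncomputable def reflection (P : E →L[ℂ] E) : E →L[ℂ] E :=
  (2 : ℂ) • P - ContinuousLinearMap.id ℂ E

theorem reflection_apply (P : E →L[ℂ] E) (f : E) : reflection P f = (2 : ℂ) • P f - f := rfl

theorem reflection_involutive {P : E →L[ℂ] E} (hP : ∀ f, P (P f) = P f) :
    Function.Involutive (reflection P) := fun f => by
  simp only [reflection_apply, map_sub, map_smul, hP]
  module

end Reflection

section BicontractiveProjection

variable {Y : Type*} [TopologicalSpace Y] [CompactSpace Y] {P : C(Y, ℂ) →L[ℂ] C(Y, ℂ)}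

theorem reflection_one (h₁ : P 1 = 1) : reflection P 1 = 1 := by
  rw [reflection_apply, h₁]
  module

theorem apply_map_realToRCLike_nonneg (h₁ : P 1 = 1) (hP : ∀ f, ‖P f‖ ≤ ‖f‖) {u : C(Y, ℝ)}
    (hu : 0 ≤ u) (y : Y) : 0 ≤ P (ι u) y :=
  map_realToRCLike_nonneg (φ := (evalCLM ℂ y).comp P) (by simp [h₁])
    (fun f => (norm_coe_le_norm _ y).trans (hP f)) hu

/-- Apply `‖id - P‖ ≤ 1` to `v - v y / 2`, whose norm is `v y / 2`. -/
theorem le_two_mul_re_apply_of_forall_le (h₁ : P 1 = 1) (hP : ∀ f, ‖f - P f‖ ≤ ‖f‖)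
    {v : C(Y, ℝ)} (hv : 0 ≤ v) {y : Y} (hy : ∀ z, v z ≤ v y) : v y ≤ 2 * (P (ι v) y).re := by
  set g := ι v - ((v y / 2 : ℝ) : ℂ) • 1
  have hg : ‖(g - P g) y‖ ≤ v y / 2 :=
    (norm_coe_le_norm _ y).trans <| (hP g).trans <|
      norm_realToRCLike_sub_half_smul_one_le (hv y) hv hy
  have hre := (abs_re_le_norm _).trans hg
  simp only [g, map_sub, map_smul, h₁, ContinuousMap.sub_apply, ContinuousMap.smul_apply,
    ContinuousMap.one_apply, smul_eq_mul, mul_one, sub_re, ofReal_re,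
    realToRCLikeStarAlgHom_apply_apply] at hre
  linarith [(abs_le.1 hre).2]

theorem reflection_nonneg (h₁ : P 1 = 1) (hP : ∀ f, ‖P f‖ ≤ ‖f‖) (hQ : ∀ f, ‖f - P f‖ ≤ ‖f‖)
    {f : C(Y, ℂ)} (hf : 0 ≤ f) : 0 ≤ reflection P f := by
  obtain ⟨u, rfl⟩ : ∃ u, ι u = f := ⟨_, (IsSelfAdjoint.of_nonneg hf).realToRCLike_rclikeToReal⟩
  have hu : 0 ≤ u := realToRCLikeStarAlgHom_nonneg_iff.1 hf
  refine le_def.2 fun y => ?_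
  -- truncate `u` at height `u y`, so that the maximum is attained at `y`
  set v := u ⊓ ContinuousMap.const Y (u y)
  have hv : 0 ≤ v := le_inf hu fun _ => hu y
  have hvy : v y = u y := by simp [v]
  have hhalf := le_two_mul_re_apply_of_forall_le h₁ hQ hv (y := y) fun z => by
    simp [v, hvy]
  have huv : 0 ≤ P (ι (u - v)) y :=
    apply_map_realToRCLike_nonneg h₁ hP (sub_nonneg.2 inf_le_left) y
  rw [map_sub, map_sub, ContinuousMap.sub_apply, nonneg_iff, sub_re] at huv
  have hPu := nonneg_iff.1 (apply_map_realToRCLike_nonneg h₁ hP hu y)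
  rw [ContinuousMap.zero_apply, reflection_apply, ContinuousMap.sub_apply,
    ContinuousMap.smul_apply, nonneg_iff]
  simp only [hvy] at hhalf
  simp only [smul_eq_mul, sub_re, sub_im, mul_re, mul_im, re_ofNat, im_ofNat, ← hPu.2,
    realToRCLikeStarAlgHom_apply_apply, ofReal_re, ofReal_im]
  constructor <;> linarith [huv.1]

end BicontractiveProjection

section PositiveInvolution

variable {Y : Type*} [TopologicalSpace Y] {θ : C(Y, ℂ) →L[ℂ] C(Y, ℂ)}

theorem exists_map_realToRCLike_eq (hθ : ∀ f, 0 ≤ f → 0 ≤ θ f) (u : C(Y, ℝ)) :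
    ∃ w, θ (ι u) = ι w := by
  have hpos (v : C(Y, ℝ)) (hv : 0 ≤ v) : IsSelfAdjoint (θ (ι v)) :=
    .of_nonneg (hθ _ (realToRCLikeStarAlgHom_nonneg_iff.2 hv))
  have hsa : IsSelfAdjoint (θ (ι u)) := by
    rw [← posPart_sub_negPart u, map_sub, map_sub]
    exact (hpos _ (posPart_nonneg u)).sub (hpos _ (negPart_nonneg u))
  exact ⟨_, hsa.realToRCLike_rclikeToReal.symm⟩

/-- A positive involution is an order automorphism, so it preserves `|u|`, the least upper bound
of `u` and `-u`. -/
theorem map_realToRCLike_abs (hθ : ∀ f, 0 ≤ f → 0 ≤ θ f) (hinv : Function.Involutive θ)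
    {u w : C(Y, ℝ)} (hw : θ (ι u) = ι w) : θ (ι |u|) = ι |w| := by
  have hmono : Monotone θ := (monotone_iff_map_nonneg θ).2 hθ
  let e : C(Y, ℂ) ≃o C(Y, ℂ) :=
    { toEquiv := hinv.toPerm θ
      map_rel_iff' := fun {f g} => ⟨fun h => by simpa [hinv _] using hmono h, fun h => hmono h⟩ }
  have hlub := e.isLUB_image'.2 (isLUB_pair_realToRCLike_abs u)
  have he (f : C(Y, ℂ)) : e f = θ f := rfl
  rw [Set.image_pair, he, he, map_neg, hw] at hlub
  exact hlub.unique (isLUB_pair_realToRCLike_abs w)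

/-- `0 ≤ v² ≤ ‖v‖ |v|`, and `θ |v| = |θ v|` vanishes at `y`. -/
theorem apply_map_realToRCLike_mul_self_eq_zero [CompactSpace Y] (hθ : ∀ f, 0 ≤ f → 0 ≤ θ f)
    (hinv : Function.Involutive θ) {v : C(Y, ℝ)} {y : Y} (hy : θ (ι v) y = 0) :
    θ (ι (v * v)) y = 0 := by
  obtain ⟨w, hw⟩ := exists_map_realToRCLike_eq hθ v
  have habs : θ (ι |v|) y = 0 := by
    rw [hw, realToRCLikeStarAlgHom_apply_apply, ofReal_eq_zero] at hy
    rw [map_realToRCLike_abs hθ hinv hw, realToRCLikeStarAlgHom_apply_apply,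
      ContinuousMap.abs_apply, hy, abs_zero, ofReal_zero]
  have hle : v * v ≤ ‖v‖ • |v| := le_def.2 fun z => by
    rw [ContinuousMap.mul_apply, ContinuousMap.smul_apply, ContinuousMap.abs_apply, smul_eq_mul,
      ← abs_mul_abs_self]
    exact mul_le_mul_of_nonneg_right (v.norm_coe_le_norm z) (abs_nonneg _)
  have hvv : 0 ≤ v * v := le_def.2 fun z => mul_self_nonneg (v z)
  have hlower := le_def.1 (hθ _ (realToRCLikeStarAlgHom_nonneg_iff.2 hvv)) y
  have hupper :=
    le_def.1 ((monotone_iff_map_nonneg θ).2 hθ (realToRCLikeStarAlgHom_le_iff.2 hle)) y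
  rw [map_smul, ← Complex.coe_smul, map_smul, ContinuousMap.smul_apply, habs, smul_zero] at hupper
  exact le_antisymm hupper hlower

theorem map_realToRCLike_mul_self [CompactSpace Y] (hθ : ∀ f, 0 ≤ f → 0 ≤ θ f)
    (hinv : Function.Involutive θ) (h₁ : θ 1 = 1) (u : C(Y, ℝ)) :
    θ (ι (u * u)) = θ (ι u) * θ (ι u) := by
  ext y
  set a : ℂ := θ (ι u) y
  obtain ⟨w, hw⟩ := exists_map_realToRCLike_eq hθ u
  have ha : a = (w y : ℂ) := by simp only [a, hw, realToRCLikeStarAlgHom_apply_apply]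
  have hshift : ι (u - ContinuousMap.const Y (w y)) = ι u - a • 1 := by
    rw [map_sub, realToRCLikeStarAlgHom_const, ha]
  have hzero := apply_map_realToRCLike_mul_self_eq_zero hθ hinv (v := u - .const Y (w y))
    (y := y) (by simp [hshift, h₁, a])
  have hexp : (ι u - a • 1) * (ι u - a • 1) = ι (u * u) - (2 * a) • ι u + (a ^ 2) • 1 := by
    ext z
    simp only [ContinuousMap.mul_apply, ContinuousMap.add_apply, ContinuousMap.sub_apply,
      ContinuousMap.smul_apply, ContinuousMap.one_apply, smul_eq_mul, map_mul,
      realToRCLikeStarAlgHom_apply_apply]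
    ring
  rw [map_mul, hshift, hexp] at hzero
  simp only [map_add, map_sub, map_smul, h₁, ContinuousMap.add_apply, ContinuousMap.sub_apply,
    ContinuousMap.smul_apply, ContinuousMap.one_apply, smul_eq_mul] at hzero
  rw [ContinuousMap.mul_apply]
  linear_combination hzero

theorem map_mul_of_map_nonneg_of_involutive [CompactSpace Y] (hθ : ∀ f, 0 ≤ f → 0 ≤ θ f)
    (hinv : Function.Involutive θ) (h₁ : θ 1 = 1) (f g : C(Y, ℂ)) :
    θ (f * g) = θ f * θ g := by
  ext y
  refine map_mul_of_map_realToRCLike_mul_self ((evalCLM ℂ y).comp θ).toLinearMap (fun u => ?_) f g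
  simpa using congr($(map_realToRCLike_mul_self hθ hinv h₁ u) y)

end PositiveInvolution

section CharacterSpace

variable {Y : Type*} [TopologicalSpace Y] [CompactSpace Y] [T2Space Y]

theorem eq_of_forall_apply_eq {z w : Y} (h : ∀ f : C(Y, ℂ), f z = f w) : z = w :=
  (WeakDual.CharacterSpace.continuousMapEval_bijective Y ℂ).1 (by ext f; exact h f)

theorem exists_comp_eq_of_map_mul {θ : C(Y, ℂ) →L[ℂ] C(Y, ℂ)} (h₁ : θ 1 = 1)
    (hmul : ∀ f g, θ (f * g) = θ f * θ g) : ∃ ρ : C(Y, Y), ∀ f, θ f = f.comp ρ := by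
  have hne (y : Y) : (evalCLM ℂ y).comp θ ≠ 0 := fun h => by
    simpa [h₁] using congr($h 1)
  let χ (y : Y) : WeakDual.characterSpace ℂ C(Y, ℂ) :=
    ⟨(evalCLM ℂ y).comp θ, hne y, fun f g => congr($(hmul f g) y)⟩
  have hχ : Continuous χ :=
    (WeakDual.continuous_of_continuous_eval fun f => (θ f).continuous).subtype_mk _
  let e := WeakDual.CharacterSpace.homeoEval Y ℂ
  refine ⟨⟨fun y => e.symm (χ y), e.symm.continuous.comp hχ⟩, fun f => ?_⟩
  ext y
  exact (congr($(e.apply_symm_apply (χ y)) f)).symm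

theorem exists_involutive_homeomorph_comp_eq {θ : C(Y, ℂ) →L[ℂ] C(Y, ℂ)} (h₁ : θ 1 = 1)
    (hmul : ∀ f g, θ (f * g) = θ f * θ g) (hinv : Function.Involutive θ) :
    ∃ ρ : Y ≃ₜ Y, Function.Involutive ρ ∧ ∀ f, θ f = f.comp (ρ : C(Y, Y)) := by
  obtain ⟨ρ, hρ⟩ := exists_comp_eq_of_map_mul h₁ hmul
  have hρρ : Function.Involutive ρ := fun y => eq_of_forall_apply_eq fun f => by
    simpa [hρ] using congr($(hinv f) y)
  exact ⟨⟨hρρ.toPerm ρ, ρ.continuous, ρ.continuous⟩, hρρ, hρ⟩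

theorem eq_or_eq_of_forall_apply_add_apply_eq {a b c d : Y}
    (h : ∀ f : C(Y, ℂ), f a + f b = f c + f d) : a = c ∨ a = d := by
  by_contra! hne
  obtain ⟨u, hu₀, hu₁, hu⟩ := exists_continuous_zero_one_of_isClosed
    ((Set.finite_singleton d).insert c).isClosed (isClosed_singleton (x := a))
    (by simpa [eq_comm] using hne)
  have h' := congr(($(h (ι u))).re)
  simp only [realToRCLikeStarAlgHom_apply_apply, add_re, ofReal_re, hu₀ (Set.mem_insert c {d}),
    hu₀ (Set.mem_insert_of_mem c rfl), hu₁ rfl, Pi.one_apply, Pi.zero_apply] at h'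
  linarith [(hu b).1]

theorem preimage_singleton_eq_pair {X : Type*} [TopologicalSpace X] [CompactSpace X] [T2Space X]
    {proj : C(Y, X)} {P : C(Y, ℂ) →L[ℂ] C(Y, ℂ)} {ρ : Y → Y}
    (hPρ : ∀ f y, P f y = (f y + f (ρ y)) / 2)
    (hPproj : ∀ f y z, proj z = proj y → P f z = P f y)
    (hfix : ∀ g : C(X, ℂ), P (g.comp proj) = g.comp proj) (y : Y) :
    proj ⁻¹' {proj y} = {y, ρ y} := by
  refine Set.ext fun z => ⟨fun hz => ?_, ?_⟩
  · refine eq_or_eq_of_forall_apply_add_apply_eq (b := ρ z) fun f => ?_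
    have h := hPproj f y z hz
    rw [hPρ, hPρ] at h
    linear_combination 2 * h
  · rintro (rfl | rfl)
    · rfl
    · refine (eq_of_forall_apply_eq fun g => ?_ : proj (ρ y) = proj y)
      have h := hPρ (g.comp proj) y
      rw [hfix] at h
      simp only [ContinuousMap.comp_apply] at h
      linear_combination -2 * h

end CharacterSpace

theorem gen_cole_extension_with_bicontractive_projection_general {X Y : Type*}
    [TopologicalSpace X] [CompactSpace X] [T2Space X]
    [TopologicalSpace Y] [CompactSpace Y] [T2Space Y]
    (A : Subalgebra ℂ C(X, ℂ))
    (B : Subalgebra ℂ C(Y, ℂ))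
    (proj : C(Y, X)) (T : C(Y, ℂ) →L[ℂ] C(X, ℂ))
    (hGCE : IsGenColeExtension A B proj T)
    (P : C(Y, ℂ) →L[ℂ] C(Y, ℂ)) (hP : ∀ f : C(Y, ℂ), P f = (T f).comp proj)
    (hbicontr : ‖ContinuousLinearMap.id ℂ C(Y, ℂ) - P‖ = 1) :
    (∀ f g : C(Y, ℂ),
      (2 : ℂ) • P (f * g) - (f * g) = ((2 : ℂ) • P f - f) * ((2 : ℂ) • P g - g)) ∧
    (∀ f : C(Y, ℂ), ‖(2 : ℂ) • P f - f‖ = ‖f‖) ∧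
    ∃ ρ : Y ≃ₜ Y,
      (∀ y : Y, ρ (ρ y) = y) ∧
      (∀ (f : C(Y, ℂ)) (y : Y), P f y = (f y + f (ρ y)) / 2) ∧
      (∀ y : Y, proj ⁻¹' {proj y} = {y, ρ y}) := by
  obtain ⟨-, hT₁, hTnorm, hTsec, -, -⟩ := hGCE
  have hP₁ : P 1 = 1 := by rw [hP, hT₁]; rfl
  have hPc (f : C(Y, ℂ)) : ‖P f‖ ≤ ‖f‖ := by
    rw [hP, ← one_mul ‖f‖, ← hTnorm]
    exact ((norm_le _ (norm_nonneg _)).2 fun y => (T f).norm_coe_le_norm (proj y)).trans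
      (T.le_opNorm f)
  have hPq (f : C(Y, ℂ)) : ‖f - P f‖ ≤ ‖f‖ := by
    have h := (ContinuousLinearMap.id ℂ _ - P).le_opNorm f
    rwa [hbicontr, one_mul] at h
  have hfix (g : C(X, ℂ)) : P (g.comp proj) = g.comp proj := by rw [hP, hTsec]
  have hθ₁ := reflection_one hP₁
  have hθinv := reflection_involutive fun f => by rw [hP f, hfix]
  have hmul :=
    map_mul_of_map_nonneg_of_involutive (fun _ => reflection_nonneg hP₁ hPc hPq) hθinv hθ₁
  obtain ⟨ρ, hρρ, hρ⟩ := exists_involutive_homeomorph_comp_eq hθ₁ hmul hθinv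
  have hPρ (f : C(Y, ℂ)) (y : Y) : P f y = (f y + f (ρ y)) / 2 := by
    have h := congr($(hρ f) y)
    simp only [reflection_apply, ContinuousMap.sub_apply, ContinuousMap.smul_apply, smul_eq_mul,
      ContinuousMap.comp_apply, ContinuousMap.coe_coe] at h
    linear_combination h / 2
  refine ⟨hmul, fun f => by rw [← reflection_apply, hρ, norm_comp_homeomorph], ρ, hρρ, hPρ,
    preimage_singleton_eq_pair hPρ (fun f y z hz => ?_) hfix⟩
  simp only [hP, ContinuousMap.comp_apply, show proj z = proj y from hz]

theorem gen_cole_extension_with_bicontractive_projection {X Y : Type*}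
    [TopologicalSpace X] [CompactSpace X] [T2Space X]
    [TopologicalSpace Y] [CompactSpace Y] [T2Space Y]
    (A : Subalgebra ℂ C(X, ℂ)) (hA : IsUniformAlgebra A)
    (B : Subalgebra ℂ C(Y, ℂ)) (hB : IsUniformAlgebra B)
    (proj : C(Y, X)) (T : C(Y, ℂ) →L[ℂ] C(X, ℂ))
    (hGCE : IsGenColeExtension A B proj T)
    (P : C(Y, ℂ) →L[ℂ] C(Y, ℂ)) (hP : ∀ f : C(Y, ℂ), P f = (T f).comp proj)
    (hbicontr : ‖ContinuousLinearMap.id ℂ C(Y, ℂ) - P‖ = 1) :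
    (∀ f g : C(Y, ℂ),
      (2 : ℂ) • P (f * g) - (f * g) = ((2 : ℂ) • P f - f) * ((2 : ℂ) • P g - g)) ∧
    (∀ f : C(Y, ℂ), ‖(2 : ℂ) • P f - f‖ = ‖f‖) ∧
    ∃ ρ : Y ≃ₜ Y,
      (∀ y : Y, ρ (ρ y) = y) ∧
      (∀ (f : C(Y, ℂ)) (y : Y), P f y = (f y + f (ρ y)) / 2) ∧
      (∀ y : Y, proj ⁻¹' {proj y} = {y, ρ y}) :=
  gen_cole_extension_with_bicontractive_projection_general A B proj T hGCE P hP hbicontr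
end
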